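/- arXiv:2602.13919 — 6 statements merged into one kernel-verified Lean document; each statement's English description precedes it below -/
import Mathlib

section
/- For any upper-triangular matrix f ∈ Mat_{n+1}(ℂ), there exist invertible upper-triangular matrices h₁, h₂ ∈ B_{n+1} such that h₂ f h₁^{-1} is a partial permutation matrix, i.e., an upper-triangular matrix all of whose entries are 0 except for at most one entry equal to 1 in each row and each column. -/
def UT (n : ℕ) (M : Matrix (Fin (n+1)) (Fin (n+1)) ℂ) : Prop :=
  ∀ i j : Fin (n+1), (j : ℕ) < (i : ℕ) → M i j = 0

def IsUTPPM (n : ℕ) (M : Matrix (Fin (n+1)) (Fin (n+1)) ℂ) : Prop :=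
  UT n M ∧ (∀ i j, M i j = 0 ∨ M i j = 1) ∧
    (∀ i j j', M i j ≠ 0 → M i j' ≠ 0 → j = j') ∧
    (∀ i i' j, M i j ≠ 0 → M i' j ≠ 0 → i = i')

/-!
The statement holds for every rectangular matrix over a field, and the reduction goes column by
column from left to right. Suppose the columns in `s`, all to the left of `a`, already form a
partial permutation matrix. Adding to column `a` suitable multiples of the columns in `s` (an
upper-triangular column operation, as they lie to the left of `a`) clears column `a` in every row
carrying a pivot of `s`. If column `a` is still nonzero, let `i₀` be its lowest nonzero row. This
row has no pivot in `s`, so adding multiples of row `i₀` to the rows above it and rescaling row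
`i₀` (an upper-triangular row operation) leaves the columns in `s` alone and turns column `a` into
the unit vector at `i₀`. Both operations are rank-one updates `1 + vecMulVec u (Pi.single k 1)`.
-/

open Finset

namespace Matrix

section RankOneUpdate

variable {m n R : Type*} [DecidableEq n]

lemma isUpperTriangular_one_add_vecMulVec_single [LinearOrder n] [Semiring R] {u : n → R}
    {k : n} (hu : ∀ i, k < i → u i = 0) :
    (1 + vecMulVec u (Pi.single k 1)).IsUpperTriangular := by
  intro i j (hji : j < i)
  rw [add_apply, one_apply_ne (ne_of_lt hji).symm, vecMulVec_apply, zero_add]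
  by_cases hj : j = k
  · subst hj
    rw [hu i hji, zero_mul]
  · rw [Pi.single_eq_of_ne hj, mul_zero]

lemma isUnit_one_add_vecMulVec_single [Fintype n] [CommRing R] {u : n → R} {k : n}
    (h : IsUnit (1 + u k)) : IsUnit (1 + vecMulVec u (Pi.single k 1)) := by
  rwa [isUnit_iff_isUnit_det, vecMulVec_eq Unit, det_one_add_replicateCol_mul_replicateRow,
    single_dotProduct, one_mul]

lemma one_add_vecMulVec_single_mul_apply [Fintype n] [Semiring R] (u : n → R) (k : n)
    (G : Matrix n m R) (i : n) (j : m) :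
    ((1 + vecMulVec u (Pi.single k 1) : Matrix n n R) * G) i j = G i j + u i * G k j := by
  rw [Matrix.add_mul, Matrix.one_mul, vecMulVec_mul, single_vecMul, one_smul, add_apply,
    vecMulVec_apply]
  rfl

lemma mul_one_add_vecMulVec_single_apply [Fintype n] [Semiring R] (G : Matrix m n R)
    (w : n → R) (k : n) (i : m) (j : n) :
    (G * (1 + vecMulVec w (Pi.single k 1) : Matrix n n R)) i j =
      G i j + (G *ᵥ w) i * (Pi.single k 1 : n → R) j := by
  rw [Matrix.mul_add, Matrix.mul_one, mul_vecMulVec, add_apply, vecMulVec_apply]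

end RankOneUpdate

variable {ι κ K : Type*}

def IsPartialPermOn [Zero K] [One K] (s : Finset κ) (G : Matrix ι κ K) : Prop :=
  (∀ i, ∀ j ∈ s, G i j = 0 ∨ G i j = 1) ∧
    (∀ i, ∀ j ∈ s, ∀ j' ∈ s, G i j ≠ 0 → G i j' ≠ 0 → j = j') ∧
    (∀ i i', ∀ j ∈ s, G i j ≠ 0 → G i' j ≠ 0 → i = i')

namespace IsPartialPermOn

variable {s : Finset κ} {G : Matrix ι κ K} {a : κ}

section Basic

variable [Zero K] [One K]

lemma empty : IsPartialPermOn (∅ : Finset κ) G := by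
  simp [IsPartialPermOn]

lemma congr {G' : Matrix ι κ K} (h : IsPartialPermOn s G)
    (hG : ∀ i, ∀ j ∈ s, G' i j = G i j) : IsPartialPermOn s G' := by
  obtain ⟨h01, hrow, hcol⟩ := h
  refine ⟨fun i j hj => ?_, fun i j hj j' hj' => ?_, fun i i' j hj => ?_⟩
  · rw [hG i j hj]
    exact h01 i j hj
  · rw [hG i j hj, hG i j' hj']
    exact hrow i j hj j' hj'
  · rw [hG i j hj, hG i' j hj]
    exact hcol i i' j hj

lemma insert_column [DecidableEq κ] (h : IsPartialPermOn s G)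
    (h01 : ∀ i, G i a = 0 ∨ G i a = 1) (hcol : ∀ i i', G i a ≠ 0 → G i' a ≠ 0 → i = i')
    (hrow : ∀ i, G i a ≠ 0 → ∀ j ∈ s, G i j = 0) :
    IsPartialPermOn (insert a s) G := by
  obtain ⟨h01s, hrows, hcols⟩ := h
  refine ⟨fun i => ?_, fun i => ?_, fun i i' => ?_⟩ <;> simp only [forall_mem_insert]
  · exact ⟨h01 i, h01s i⟩
  · exact ⟨⟨fun _ _ => trivial, fun j hj hia hij => absurd (hrow i hia j hj) hij⟩,
      fun j hj => ⟨fun hij hia => absurd (hrow i hia j hj) hij, hrows i j hj⟩⟩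
  · exact ⟨hcol i i', hcols i i'⟩

end Basic

lemma mulVec_apply_eq_of_ne_zero [Fintype κ] [Semiring K] (h : IsPartialPermOn s G)
    {w : κ → K} (hw : ∀ j ∉ s, w j = 0) {i : ι} {j : κ} (hj : j ∈ s) (hij : G i j ≠ 0) :
    (G *ᵥ w) i = w j := by
  rw [mulVec, dotProduct, sum_eq_single j, (h.1 i j hj).resolve_left hij, one_mul]
  · intro j' _ hj'
    by_cases hs : j' ∈ s
    · rw [not_ne_iff.mp fun hij' => hj' (h.2.1 i j' hs j hj hij' hij), zero_mul]
    · rw [hw j' hs, mul_zero]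
  · simp

lemma exists_mul_clear_column [Fintype ι] [Fintype κ] [LinearOrder κ] [CommRing K]
    (h : IsPartialPermOn s G) (hs : ∀ j ∈ s, j < a) :
    ∃ E : Matrix κ κ K, E.IsUpperTriangular ∧ IsUnit E ∧ IsPartialPermOn s (G * E) ∧
      ∀ i, (G * E) i a ≠ 0 → ∀ j ∈ s, (G * E) i j = 0 := by
  classical
  set w : κ → K := fun j => if j ∈ s then -∑ i, G i j * G i a else 0 with hw_def
  have hw : ∀ j ∉ s, w j = 0 := fun j hj => if_neg hj
  have hwa : w a = 0 := hw a fun ha => lt_irrefl a (hs a ha)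
  set E : Matrix κ κ K := 1 + vecMulVec w (Pi.single a 1)
  have hGE : ∀ i, ∀ j ∈ s, (G * E) i j = G i j := by
    intro i j hj
    rw [mul_one_add_vecMulVec_single_apply, Pi.single_eq_of_ne (hs j hj).ne, mul_zero, add_zero]
  refine ⟨E, isUpperTriangular_one_add_vecMulVec_single fun j hj => ?_,
    isUnit_one_add_vecMulVec_single (by rw [hwa, add_zero]; exact isUnit_one),
    h.congr hGE, fun i hia j hj => ?_⟩
  · exact hw j fun hjs => lt_asymm hj (hs j hjs)
  rw [hGE i j hj]
  by_contra hij
  apply hia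
  have hcol : ∑ i', G i' j * G i' a = G i a := by
    rw [sum_eq_single i, (h.1 i j hj).resolve_left hij, one_mul]
    · intro i' _ hi'
      rw [not_ne_iff.mp fun hi'j => hi' (h.2.2 i' i j hj hi'j hij), zero_mul]
    · simp
  have hwj : w j = -G i a := by simp only [hw_def, if_pos hj, hcol]
  rw [mul_one_add_vecMulVec_single_apply, h.mulVec_apply_eq_of_ne_zero hw hj hij,
    Pi.single_eq_same, mul_one, hwj, add_neg_cancel]

lemma exists_mul_insert [DecidableEq κ] [Fintype ι] [LinearOrder ι] [Field K]
    (h : IsPartialPermOn s G) (hclear : ∀ i, G i a ≠ 0 → ∀ j ∈ s, G i j = 0) :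
    ∃ E : Matrix ι ι K, E.IsUpperTriangular ∧ IsUnit E ∧
      IsPartialPermOn (insert a s) (E * G) := by
  classical
  by_cases hzero : ∀ i, G i a = 0
  · refine ⟨1, blockTriangular_one, isUnit_one, ?_⟩
    rw [Matrix.one_mul]
    exact h.insert_column (fun i => .inl (hzero i)) (fun i _ hi => absurd (hzero i) hi)
      (fun i hi => absurd (hzero i) hi)
  simp only [not_forall] at hzero
  obtain ⟨i₀, hi₀, hmax⟩ := (univ.filter fun i => G i a ≠ 0).exists_max_image id
    (by simpa [Finset.Nonempty] using hzero)
  simp only [mem_filter, mem_univ, true_and, id] at hi₀ hmax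
  have hbelow : ∀ i, i₀ < i → G i a = 0 := fun i hi => by
    by_contra hia
    exact not_lt_of_ge (hmax i hia) hi
  set u : ι → K := (G i₀ a)⁻¹ • (Pi.single i₀ 1 - fun i => G i a) with hu
  set E : Matrix ι ι K := 1 + vecMulVec u (Pi.single i₀ 1)
  have hEG : ∀ i j, (E * G) i j = G i j + u i * G i₀ j :=
    one_add_vecMulVec_single_mul_apply u i₀ G
  have hEGs : ∀ i, ∀ j ∈ s, (E * G) i j = G i j := fun i j hj => by
    rw [hEG, hclear i₀ hi₀ j hj, mul_zero, add_zero]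
  have hEGa : ∀ i, (E * G) i a = (Pi.single i₀ 1 : ι → K) i := fun i => by
    rw [hEG, hu, Pi.smul_apply, Pi.sub_apply, smul_eq_mul, mul_right_comm, inv_mul_cancel₀ hi₀,
      one_mul, add_sub_cancel]
  have hpivot : ∀ i, (E * G) i a ≠ 0 → i = i₀ := fun i hi => by
    by_contra hne
    exact hi (by rw [hEGa, Pi.single_eq_of_ne hne])
  refine ⟨E, isUpperTriangular_one_add_vecMulVec_single fun i hi => ?_,
    isUnit_one_add_vecMulVec_single ?_, (h.congr hEGs).insert_column (fun i => ?_)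
    (fun i i' hi hi' => (hpivot i hi).trans (hpivot i' hi').symm) fun i hi j hj => ?_⟩
  · rw [hu, Pi.smul_apply, Pi.sub_apply, Pi.single_eq_of_ne hi.ne', hbelow i hi, sub_zero,
      smul_zero]
  · rw [hu, Pi.smul_apply, Pi.sub_apply, Pi.single_eq_same, smul_eq_mul, mul_sub, mul_one,
      inv_mul_cancel₀ hi₀, add_sub_cancel]
    exact isUnit_iff_ne_zero.mpr (inv_ne_zero hi₀)
  · rcases eq_or_ne i i₀ with rfl | hi
    · exact .inr (by rw [hEGa, Pi.single_eq_same])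
    · exact .inl (by rw [hEGa, Pi.single_eq_of_ne hi])
  · rw [hpivot i hi, hEGs i₀ j hj, hclear i₀ hi₀ j hj]

end IsPartialPermOn

theorem exists_upperTriangular_mul_mul_isPartialPermOn [Fintype ι] [LinearOrder ι]
    [Fintype κ] [LinearOrder κ] [Field K] (f : Matrix ι κ K) (s : Finset κ) :
    ∃ b₂ : Matrix ι ι K, ∃ b₁ : Matrix κ κ K, b₂.IsUpperTriangular ∧ IsUnit b₂ ∧
      b₁.IsUpperTriangular ∧ IsUnit b₁ ∧ IsPartialPermOn s (b₂ * f * b₁) := by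
  induction s using Finset.induction_on_max with
  | empty => exact ⟨1, 1, blockTriangular_one, isUnit_one, blockTriangular_one, isUnit_one, .empty⟩
  | insert a s hs ih =>
    obtain ⟨b₂, b₁, hb₂, ub₂, hb₁, ub₁, hP⟩ := ih
    obtain ⟨E₁, hE₁, uE₁, hP₁, hclear⟩ := hP.exists_mul_clear_column hs
    obtain ⟨E₂, hE₂, uE₂, hP₂⟩ := hP₁.exists_mul_insert hclear
    refine ⟨E₂ * b₂, b₁ * E₁, hE₂.mul hb₂, uE₂.mul ub₂, hb₁.mul hE₁, ub₁.mul uE₁, ?_⟩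
    simpa only [Matrix.mul_assoc] using hP₂

end Matrix

open Matrix

/-- every upper-triangular matrix can be brought to an upper-triangular
partial permutation matrix by the base change action `(h₁, h₂) · f = h₂ f h₁⁻¹`
of `B_{n+1} × B_{n+1}`. -/
theorem stmt2 (n : ℕ) (f : Matrix (Fin (n+1)) (Fin (n+1)) ℂ) (hf : UT n f) :
    ∃ h₁ h₂ : Matrix (Fin (n+1)) (Fin (n+1)) ℂ,
      UT n h₁ ∧ IsUnit h₁ ∧ UT n h₂ ∧ IsUnit h₂ ∧
      IsUTPPM n (h₂ * f * h₁⁻¹) := by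
  obtain ⟨b₂, b₁, hb₂, ub₂, hb₁, ub₁, hP⟩ :=
    exists_upperTriangular_mul_mul_isPartialPermOn f univ
  have := ub₁.invertible
  have hb₁inv : b₁⁻¹.IsUpperTriangular := blockTriangular_inv_of_blockTriangular hb₁
  have hf' : f.IsUpperTriangular := fun i j h => hf i j h
  refine ⟨b₁⁻¹, b₂, fun i j h => hb₁inv h, isUnit_nonsing_inv_iff.mpr ub₁, fun i j h => hb₂ h,
    ub₂, ?_⟩
  rw [nonsing_inv_nonsing_inv _ ((isUnit_iff_isUnit_det _).mp ub₁)]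
  exact ⟨fun i j h => (hb₂.mul hf').mul hb₁ h,
    by simpa only [IsPartialPermOn, mem_univ, forall_const] using hP⟩
end

section
/- If w and w' are two upper-triangular partial permutation matrices in Mat_{n+1}(ℂ) and there exist h₁, h₂ ∈ B_{n+1} with h₂ w h₁^{-1} = w', then w = w'. -/
lemma ut_iff (n : ℕ) (M : Matrix (Fin (n+1)) (Fin (n+1)) ℂ) :
    UT n M ↔ M.BlockTriangular (fun i : Fin (n+1) => (i : ℕ)) := by
  constructor
  · intro h i j hij; exact h i j hij
  · intro h i j hij; exact h hij

lemma ut_inv (n : ℕ) (M : Matrix (Fin (n+1)) (Fin (n+1)) ℂ)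
    (h : UT n M) (hu : IsUnit M) : UT n M⁻¹ := by
  rw [ut_iff] at h ⊢
  have : Invertible M := hu.invertible
  exact Matrix.blockTriangular_inv_of_blockTriangular h

lemma diag_ne (n : ℕ) (M : Matrix (Fin (n+1)) (Fin (n+1)) ℂ)
    (h : UT n M) (hu : IsUnit M) (i : Fin (n+1)) : M i i ≠ 0 := by
  have hinv : UT n M⁻¹ := ut_inv n M h hu
  have h1 : (M * M⁻¹) i i = 1 := by
    rw [Matrix.mul_nonsing_inv M ((Matrix.isUnit_iff_isUnit_det M).mp hu)]
    simp [Matrix.one_apply]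
  rw [Matrix.mul_apply] at h1
  have : ∑ k, M i k * M⁻¹ k i = M i i * M⁻¹ i i := by
    apply Finset.sum_eq_single
    · intro k _ hk
      rcases lt_or_gt_of_ne (fun h' : (k : ℕ) = (i : ℕ) => hk (Fin.ext h')) with hlt | hgt
      · rw [h i k hlt, zero_mul]
      · rw [hinv k i hgt, mul_zero]
    · intro h'; exact absurd (Finset.mem_univ i) h'
  rw [this] at h1
  intro h0
  rw [h0, zero_mul] at h1
  exact zero_ne_one h1

/-- One step: if `h₂ * w = w' * h₁` with `h₂` having nonzero diagonal, `h₁` UT,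
and `w` a partial permutation matrix, then a nonzero entry of `w` at `(i,j)`
forces a nonzero entry of `w'` in row `i` at some column `k ≤ j`. -/
lemma step (n : ℕ) (w w' h₁ h₂ : Matrix (Fin (n+1)) (Fin (n+1)) ℂ)
    (hw : IsUTPPM n w) (hh₁ : UT n h₁) (hh₂ : UT n h₂) (hd₂ : ∀ i, h₂ i i ≠ 0)
    (heq : h₂ * w = w' * h₁) (i j : Fin (n+1)) (hij : w i j ≠ 0) :
    ∃ k : Fin (n+1), (k : ℕ) ≤ (j : ℕ) ∧ w' i k ≠ 0 := by
  obtain ⟨hwut, _, _, hcol⟩ := hw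
  have hL : (h₂ * w) i j ≠ 0 := by
    rw [Matrix.mul_apply]
    have : ∑ k, h₂ i k * w k j = h₂ i i * w i j := by
      apply Finset.sum_eq_single
      · intro k _ hk
        by_cases hz : w k j = 0
        · rw [hz, mul_zero]
        · exact absurd (hcol k i j hz hij) hk
      · intro h'; exact absurd (Finset.mem_univ i) h'
    rw [this]
    exact mul_ne_zero (hd₂ i) hij
  rw [heq, Matrix.mul_apply] at hL
  obtain ⟨k, _, hk⟩ := Finset.exists_ne_zero_of_sum_ne_zero hL
  refine ⟨k, ?_, fun h0 => hk (by rw [h0, zero_mul])⟩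
  by_contra hgt
  push_neg at hgt
  rw [hh₁ k j hgt, mul_zero] at hk
  exact hk rfl

/-- Forward direction: nonzero entries of `w` are nonzero entries of `w'`. -/
lemma fwd (n : ℕ) (w w' h₁ h₂ h₁' h₂' : Matrix (Fin (n+1)) (Fin (n+1)) ℂ)
    (hw : IsUTPPM n w) (hw' : IsUTPPM n w')
    (hh₁ : UT n h₁) (hh₂ : UT n h₂) (hd₂ : ∀ i, h₂ i i ≠ 0)
    (hh₁' : UT n h₁') (hh₂' : UT n h₂') (hd₂' : ∀ i, h₂' i i ≠ 0)
    (heq : h₂ * w = w' * h₁) (heq' : h₂' * w' = w * h₁')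
    (i j : Fin (n+1)) (hij : w i j ≠ 0) : w' i j ≠ 0 := by
  obtain ⟨k, hkj, hk⟩ := step n w w' h₁ h₂ hw hh₁ hh₂ hd₂ heq i j hij
  obtain ⟨m, hmk, hm⟩ := step n w' w h₁' h₂' hw' hh₁' hh₂' hd₂' heq' i k hk
  have hrow := hw.2.2.1
  have hmj : m = j := hrow i m j hm hij
  rw [hmj] at hmk
  have : k = j := Fin.ext (le_antisymm hkj hmk)
  exact this ▸ hk

/-- two upper-triangular partial permutation matrices in the same
`B_{n+1} × B_{n+1}`-orbit are equal. -/
theorem stmt3 (n : ℕ) (w w' : Matrix (Fin (n+1)) (Fin (n+1)) ℂ)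
    (hw : IsUTPPM n w) (hw' : IsUTPPM n w')
    (h₁ h₂ : Matrix (Fin (n+1)) (Fin (n+1)) ℂ)
    (hh₁ : UT n h₁) (hu₁ : IsUnit h₁) (hh₂ : UT n h₂) (hu₂ : IsUnit h₂)
    (horb : h₂ * w * h₁⁻¹ = w') :
    w = w' := by
  have hdet₁ := (Matrix.isUnit_iff_isUnit_det h₁).mp hu₁
  have hdet₂ := (Matrix.isUnit_iff_isUnit_det h₂).mp hu₂
  have hh₁i : UT n h₁⁻¹ := ut_inv n h₁ hh₁ hu₁
  have hh₂i : UT n h₂⁻¹ := ut_inv n h₂ hh₂ hu₂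
  have hd₂ : ∀ i, h₂ i i ≠ 0 := diag_ne n h₂ hh₂ hu₂
  have hd₂i : ∀ i, h₂⁻¹ i i ≠ 0 := by
    intro i
    have h0 : UT n h₂⁻¹ := hh₂i
    have : IsUnit h₂⁻¹ := Matrix.isUnit_nonsing_inv_iff.mpr hu₂
    exact diag_ne n h₂⁻¹ h0 this i
  have heq : h₂ * w = w' * h₁ := by
    have := congrArg (· * h₁) horb
    simpa [mul_assoc, Matrix.nonsing_inv_mul h₁ hdet₁] using this
  have heq' : h₂⁻¹ * w' = w * h₁⁻¹ := by
    have := congrArg (fun M => h₂⁻¹ * M * h₁⁻¹) heq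
    simp only [← mul_assoc, Matrix.nonsing_inv_mul h₂ hdet₂] at this
    simpa [mul_assoc, Matrix.mul_nonsing_inv h₁ hdet₁] using this.symm
  ext i j
  rcases hw.2.1 i j with h0 | h1
  · rcases hw'.2.1 i j with h0' | h1'
    · rw [h0, h0']
    · exfalso
      have : w i j ≠ 0 :=
        fwd n w' w h₁⁻¹ h₂⁻¹ h₁ h₂ hw' hw hh₁i hh₂i hd₂i hh₁ hh₂ hd₂ heq' heq i j
          (by rw [h1']; exact one_ne_zero)
      exact this h0
  · have : w' i j ≠ 0 :=
      fwd n w w' h₁ h₂ h₁⁻¹ h₂⁻¹ hw hw' hh₁ hh₂ hd₂ hh₁i hh₂i hd₂i heq heq' i j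
        (by rw [h1]; exact one_ne_zero)
    rcases hw'.2.1 i j with h0' | h1'
    · exact absurd h0' this
    · rw [h1, h1']
end

section
/- For upper-triangular matrices f, g ∈ Mat_{n+1}(ℂ), if there exist h₁, h₂ ∈ B_{n+1} with g = h₂ f h₁^{-1}, then for all 1 ≤ p ≤ q ≤ n+1 the lower-left p×q submatrices of f and g (rows n+2−p through n+1, columns 1 through q) have equal rank. -/
/-- Rank of the lower-left `p × q` submatrix of `M` (rows `n+2-p, …, n+1` and
columns `1, …, q` in 1-indexed terms). -/
noncomputable def swRank (n p q : ℕ) (M : Matrix (Fin (n+1)) (Fin (n+1)) ℂ) : ℕ :=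
  (Matrix.of (fun (i : {i : Fin (n+1) // n + 1 - p ≤ (i : ℕ)})
      (j : {j : Fin (n+1) // (j : ℕ) < q}) => M i.1 j.1)).rank

open Matrix Finset in
lemma rank_unit_mul_aux {m k : Type*} [Fintype m] [Fintype k] [DecidableEq m]
    (A : Matrix m m ℂ) (hA : IsUnit A) (M : Matrix m k ℂ) : (A * M).rank = M.rank := by
  haveI := hA.invertible
  refine le_antisymm (Matrix.rank_mul_le_right A M) ?_
  conv_lhs => rw [← Matrix.inv_mul_cancel_left_of_invertible (A := A) M]
  exact Matrix.rank_mul_le_right A⁻¹ (A * M)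

open Matrix Finset in
lemma rank_mul_unit_aux {m k : Type*} [Fintype m] [Fintype k] [DecidableEq m]
    (A : Matrix m m ℂ) (hA : IsUnit A) (M : Matrix k m ℂ) : (M * A).rank = M.rank := by
  haveI := hA.invertible
  refine le_antisymm (Matrix.rank_mul_le_left M A) ?_
  conv_lhs => rw [← Matrix.mul_inv_cancel_right_of_invertible (A := A) M]
  exact Matrix.rank_mul_le_left (M * A) A⁻¹

open Matrix Finset in
lemma UT_diag_ne_zero {n : ℕ} {M : Matrix (Fin (n+1)) (Fin (n+1)) ℂ}
    (h : UT n M) (hu : IsUnit M) : ∀ i, M i i ≠ 0 := by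
  have hd : M.det = ∏ i, M i i :=
    Matrix.det_of_upperTriangular (fun i j hij => h i j hij)
  have hdet : M.det ≠ 0 := ((Matrix.isUnit_iff_isUnit_det M).mp hu).ne_zero
  rw [hd] at hdet
  exact fun i => Finset.prod_ne_zero_iff.mp hdet i (mem_univ i)

open Matrix Finset in
/-- The key factorization of the south-west block of `h₂ * f * hinv`. -/
lemma sw_block_factor (n p q : ℕ) (h₂ f hinv : Matrix (Fin (n+1)) (Fin (n+1)) ℂ)
    (hh₂ : ∀ i j : Fin (n+1), (j:ℕ) < (i:ℕ) → h₂ i j = 0)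
    (hi : ∀ i j : Fin (n+1), (j:ℕ) < (i:ℕ) → hinv i j = 0) :
    (Matrix.of (fun (i : {i : Fin (n+1) // n + 1 - p ≤ (i : ℕ)})
        (j : {j : Fin (n+1) // (j : ℕ) < q}) => (h₂ * f * hinv) i.1 j.1))
    = (Matrix.of fun (i k : {i : Fin (n+1) // n + 1 - p ≤ (i : ℕ)}) => h₂ i.1 k.1)
      * ((Matrix.of (fun (i : {i : Fin (n+1) // n + 1 - p ≤ (i : ℕ)})
        (j : {j : Fin (n+1) // (j : ℕ) < q}) => f i.1 j.1))
      * (Matrix.of fun (l j : {j : Fin (n+1) // (j : ℕ) < q}) => hinv l.1 j.1)) := by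
  classical
  ext i j
  simp only [Matrix.mul_apply, Matrix.of_apply]
  have hk : ∀ l : Fin (n+1), (∑ k : Fin (n+1), h₂ i.1 k * f k l)
      = ∑ k : {i : Fin (n+1) // n + 1 - p ≤ (i : ℕ)}, h₂ i.1 k.1 * f k.1 l := by
    intro l
    rw [← Finset.sum_subtype (p := fun k : Fin (n+1) => n + 1 - p ≤ (k:ℕ))
      (univ.filter fun k : Fin (n+1) => n + 1 - p ≤ (k:ℕ)) (by simp) (fun k => h₂ i.1 k * f k l)]
    refine (Finset.sum_filter_of_ne fun k _ hne => ?_).symm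
    by_contra hk
    push_neg at hk
    exact hne (by rw [hh₂ i.1 k (lt_of_lt_of_le hk i.2), zero_mul])
  have hl : ∀ (t : Fin (n+1) → ℂ), (∀ l : Fin (n+1), ¬ (l:ℕ) < q → t l = 0) →
      (∑ l : Fin (n+1), t l) = ∑ l : {j : Fin (n+1) // (j : ℕ) < q}, t l.1 := by
    intro t ht
    rw [← Finset.sum_subtype (p := fun l : Fin (n+1) => (l:ℕ) < q)
      (univ.filter fun l : Fin (n+1) => (l:ℕ) < q) (by simp) t]
    refine (Finset.sum_filter_of_ne fun l _ hne => ?_).symm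
    by_contra hlq
    exact hne (ht l hlq)
  rw [hl (fun l => (∑ k : Fin (n+1), h₂ i.1 k * f k l) * hinv l j.1)
    (fun l hlq => by simp [hi l j.1 (lt_of_lt_of_le j.2 (not_lt.mp hlq))])]
  simp_rw [hk, Finset.sum_mul, mul_assoc, Finset.mul_sum]
  rw [Finset.sum_comm]

/-- the base change action of `B_{n+1} × B_{n+1}` preserves all
lower-left (south-west) ranks. -/
theorem stmt4 (n : ℕ) (f g : Matrix (Fin (n+1)) (Fin (n+1)) ℂ)
    (hf : UT n f) (hg : UT n g)
    (h₁ h₂ : Matrix (Fin (n+1)) (Fin (n+1)) ℂ)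
    (hh₁ : UT n h₁) (hu₁ : IsUnit h₁) (hh₂ : UT n h₂) (hu₂ : IsUnit h₂)
    (horb : g = h₂ * f * h₁⁻¹) :
    ∀ p q : ℕ, 1 ≤ p → p ≤ q → q ≤ n + 1 → swRank n p q f = swRank n p q g := by
  classical
  intro p q _ _ _
  haveI := hu₁.invertible
  -- the inverse of an upper-triangular invertible matrix is upper-triangular
  have hinvUT : UT n h₁⁻¹ := by
    have hbt := Matrix.blockTriangular_inv_of_blockTriangular
      (M := h₁) (b := (id : Fin (n+1) → Fin (n+1))) (fun i j hij => hh₁ i j hij)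
    exact fun i j hij => hbt (show (id j : Fin (n+1)) < id i from hij)
  have huinv : IsUnit h₁⁻¹ := Matrix.isUnit_nonsing_inv_iff.mpr hu₁
  -- abbreviations
  set A : Matrix {i : Fin (n+1) // n + 1 - p ≤ (i : ℕ)}
      {i : Fin (n+1) // n + 1 - p ≤ (i : ℕ)} ℂ := Matrix.of fun i k => h₂ i.1 k.1 with hA
  set B : Matrix {j : Fin (n+1) // (j : ℕ) < q}
      {j : Fin (n+1) // (j : ℕ) < q} ℂ := Matrix.of fun l j => h₁⁻¹ l.1 j.1 with hB
  have hAbt : A.BlockTriangular id := fun i k hik =>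
    hh₂ i.1 k.1 (by exact_mod_cast (Subtype.coe_lt_coe.mpr hik : (k.1 : Fin (n+1)) < i.1))
  have hBbt : B.BlockTriangular id := fun l j hlj =>
    hinvUT l.1 j.1 (by exact_mod_cast (Subtype.coe_lt_coe.mpr hlj : (j.1 : Fin (n+1)) < l.1))
  have hAunit : IsUnit A := by
    rw [Matrix.isUnit_iff_isUnit_det, Matrix.det_of_upperTriangular hAbt, isUnit_iff_ne_zero]
    exact Finset.prod_ne_zero_iff.mpr fun i _ => UT_diag_ne_zero hh₂ hu₂ i.1
  have hBunit : IsUnit B := by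
    rw [Matrix.isUnit_iff_isUnit_det, Matrix.det_of_upperTriangular hBbt, isUnit_iff_ne_zero]
    exact Finset.prod_ne_zero_iff.mpr fun j _ => UT_diag_ne_zero hinvUT huinv j.1
  -- factor the south-west block of g
  have hfac := sw_block_factor n p q h₂ f h₁⁻¹ hh₂ hinvUT
  rw [← horb] at hfac
  unfold swRank
  rw [hfac, rank_unit_mul_aux _ hAunit, rank_mul_unit_aux _ hBunit]
end

section
/- The number of orbits of the action (h₁,h₂)·f = h₂ f h₁^{-1} of B_{n+1} × B_{n+1} on the set of upper-triangular matrices U_{n+1} ⊆ Mat_{n+1}(ℂ) is the Bell number b_{n+2}. -/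
/-!
Every orbit contains exactly one rook matrix: the 0/1 matrix with non-attacking rooks at the
positions `(i, p i)`, where `i ≤ p i` (`p i = none` is an empty row). Existence: sweeping the
columns from left to right, the lowest nonzero entry of a column is a pivot, and row operations
upwards and column operations to the right, both upper-triangular, clear its column and its row.
Uniqueness: for an upper set `R` of rows and a lower set `C` of columns the rank of the `R × C`
submatrix is an invariant, and for a rook matrix it counts the rooks in `R × C`, which determines
the placement.

Sending the rook at `(i, j)` to the arc `i → j + 1` identifies these rook placements on `n + 1`
points with the arc diagrams (`i < p i`) on `n + 2` points, i.e. with set partitions, each arc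
joining consecutive elements of a block. An arc diagram on a set with least element `a` amounts to
the set `V` of points outside the block of `a`, which is an arbitrary set of points other than `a`,
together with an arc diagram on `V`; this is the Bell recurrence.
-/

open Matrix Finset Relation

namespace UpperTriangularOrbits

section Combinatorics

def IsPartialInjective {m n : Type*} (p : m → Option n) : Prop :=
  ∀ ⦃i₁ i₂ j⦄, p i₁ = some j → p i₂ = some j → i₁ = i₂

def IsRookPlacement {ι : Type*} [LE ι] (p : ι → Option ι) : Prop :=
  (∀ i j, p i = some j → i ≤ j) ∧ IsPartialInjective p

def IsArcDiagram {α : Type*} [LT α] (p : α → Option α) : Prop :=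
  (∀ i j, p i = some j → i < j) ∧ IsPartialInjective p

abbrev ArcDiagrams (α : Type*) [LT α] := {p : α → Option α // IsArcDiagram p}

end Combinatorics

section RookMatrix

variable {m n : Type*} [DecidableEq n]

def rookMatrix (K : Type*) [Zero K] [One K] (p : m → Option n) : Matrix m n K :=
  of fun i j => if p i = some j then 1 else 0

variable {K : Type*} [Field K]

theorem rank_submatrix_rookMatrix {m' n' : Type*} [Fintype m'] [Fintype n'] {p : m → Option n}
    (hp : IsPartialInjective p) {f : m' → m} (hf : f.Injective) {g : n' → n}
    (hg : g.Injective) :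
    ((rookMatrix K p).submatrix f g).rank = Fintype.card {r // ∃ s, p (f r) = some (g s)} := by
  classical
  -- `N Nᵀ` is diagonal and `N Nᵀ N = N`, so `N` has the rank of `N Nᵀ`.
  set N := (rookMatrix K p).submatrix f g
  set d : m' → K := fun r => if ∃ s, p (f r) = some (g s) then 1 else 0
  have hNN : N * Nᵀ = diagonal d := by
    ext r r'
    simp only [N, d, mul_apply, transpose_apply, submatrix_apply, rookMatrix, of_apply,
      mul_ite, mul_one, mul_zero, diagonal_apply]
    by_cases hr : ∃ s, p (f r) = some (g s)
    · obtain ⟨s₀, hs₀⟩ := hr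
      have hj : ∀ j, p (f r) = some (g j) ↔ j = s₀ := fun j =>
        ⟨fun h => hg (Option.some_injective _ (h.symm.trans hs₀)), fun h => h ▸ hs₀⟩
      have hr' : p (f r') = some (g s₀) ↔ r = r' :=
        ⟨fun h => hf (hp hs₀ h), fun h => h ▸ hs₀⟩
      simp only [hj]
      rw [sum_eq_single s₀ (fun j _ hj => by simp [hj]) (by simp)]
      simp [hr']
    · simp only [not_exists] at hr
      simp [hr]
  have hN : N * Nᵀ * N = N := by
    ext r s
    rw [hNN, diagonal_mul]
    by_cases h : N r s = 0
    · rw [h, mul_zero]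
    · have hrs : p (f r) = some (g s) := by
        by_contra hne
        exact h (by simp [N, rookMatrix, hne])
      rw [show d r = 1 from if_pos ⟨s, hrs⟩, one_mul]
  have hle := rank_mul_le_left (N * Nᵀ) N
  rw [hN] at hle
  rw [← le_antisymm (rank_mul_le_left N Nᵀ) hle, hNN, rank_diagonal]
  exact Fintype.card_congr (Equiv.subtypeEquivRight fun r => by simp [d])

theorem isUpperTriangular_rookMatrix {ι : Type*} [LinearOrder ι] {p : ι → Option ι}
    (hp : IsRookPlacement p) : (rookMatrix K p).IsUpperTriangular := fun i j hji =>
  if_neg fun h => (hp.1 i j h).not_gt hji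

end RookMatrix

section Triangular

variable {ι R : Type*} [Fintype ι] [LinearOrder ι] [CommRing R]

theorem isUpperTriangular_inv {A : Matrix ι ι R} (hA : A.IsUpperTriangular) :
    A⁻¹.IsUpperTriangular := by
  by_cases h : IsUnit A.det
  · have := A.invertibleOfIsUnitDet h
    exact blockTriangular_inv_of_blockTriangular hA
  · rw [nonsing_inv_apply_not_isUnit A h]
    exact blockTriangular_zero

def corner (M : Matrix ι ι R) (S T : Finset ι) : Matrix S T R :=
  M.submatrix (↑) (↑)

theorem corner_mul_of_isUpperSet {A : Matrix ι ι R} (hA : A.IsUpperTriangular)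
    (N : Matrix ι ι R) {S : Finset ι} (hS : IsUpperSet (S : Set ι)) (T : Finset ι) :
    corner (A * N) S T = corner A S S * corner N S T := by
  ext r s
  simp only [corner, submatrix_apply, mul_apply]
  rw [Finset.sum_coe_sort S (fun k => A r k * N k s)]
  refine (Finset.sum_subset (subset_univ S) fun k _ hk => ?_).symm
  rw [hA (lt_of_not_ge fun h => hk (hS h r.2)), zero_mul]

theorem corner_mul_of_isLowerSet {B : Matrix ι ι R} (hB : B.IsUpperTriangular)
    (N : Matrix ι ι R) (S : Finset ι) {T : Finset ι} (hT : IsLowerSet (T : Set ι)) :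
    corner (N * B) S T = corner N S T * corner B T T := by
  ext r s
  simp only [corner, submatrix_apply, mul_apply]
  rw [Finset.sum_coe_sort T (fun k => N r k * B k s)]
  refine (Finset.sum_subset (subset_univ T) fun k _ hk => ?_).symm
  rw [hB (lt_of_not_ge fun h => hk (hT h s.2)), mul_zero]

end Triangular

section Borel

variable {ι K : Type*} [Fintype ι] [LinearOrder ι] [Field K]

theorem isUnit_iff_diag_ne_zero {A : Matrix ι ι K} (hA : A.IsUpperTriangular) :
    IsUnit A ↔ ∀ i, A i i ≠ 0 := by
  rw [isUnit_iff_isUnit_det, det_of_isUpperTriangular hA, isUnit_iff_ne_zero,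
    prod_ne_zero_iff]
  simp

variable (ι K) in
def borel : Submonoid (Matrix ι ι K) where
  carrier := {A | A.IsUpperTriangular ∧ IsUnit A}
  mul_mem' hA hB := ⟨hA.1.mul hB.1, hA.2.mul hB.2⟩
  one_mem' := ⟨blockTriangular_one, isUnit_one⟩

theorem inv_mem_borel {A : Matrix ι ι K} (hA : A ∈ borel ι K) : A⁻¹ ∈ borel ι K :=
  ⟨isUpperTriangular_inv hA.1, isUnit_nonsing_inv_iff.mpr hA.2⟩

theorem det_corner_ne_zero {A : Matrix ι ι K} (hA : A ∈ borel ι K) (S : Finset ι) :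
    (corner A S S).det ≠ 0 := by
  have hS : (corner A S S).IsUpperTriangular := hA.1.submatrix
  rw [det_of_isUpperTriangular hS, prod_ne_zero_iff]
  exact fun i _ => (isUnit_iff_diag_ne_zero hA.1).mp hA.2 i

theorem rank_corner_mul_mul {A B : Matrix ι ι K} (hA : A ∈ borel ι K) (hB : B ∈ borel ι K)
    (M : Matrix ι ι K) {R C : Finset ι} (hR : IsUpperSet (R : Set ι))
    (hC : IsLowerSet (C : Set ι)) : (corner (A * M * B) R C).rank = (corner M R C).rank := by
  rw [corner_mul_of_isLowerSet hB.1 _ _ hC, corner_mul_of_isUpperSet hA.1 _ hR,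
    rank_mul_eq_left_of_det_ne_zero _ _ (det_corner_ne_zero hB C),
    rank_mul_eq_right_of_det_ne_zero _ _ (det_corner_ne_zero hA R)]

end Borel

section CornerCount

theorem eq_some_iff_exists_le_and_not_exists_lt {ι : Type*} [LinearOrder ι] {o : Option ι}
    {s : ι} : o = some s ↔ (∃ s' ≤ s, o = some s') ∧ ¬ ∃ s' < s, o = some s' := by
  cases o with
  | none => simp
  | some a =>
    simp only [Option.some.injEq, exists_eq_right', not_lt]
    exact le_antisymm_iff

variable {ι : Type*} [LinearOrder ι]

def cornerCount (p : ι → Option ι) (R C : Finset ι) : ℕ :=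
  #{r ∈ R | ∃ s ∈ C, p r = some s}

theorem rank_corner_rookMatrix {K : Type*} [Field K] {p : ι → Option ι}
    (hp : IsPartialInjective p) (R C : Finset ι) :
    (corner (rookMatrix K p) R C).rank = cornerCount p R C := by
  rw [corner, rank_submatrix_rookMatrix hp Subtype.val_injective Subtype.val_injective,
    cornerCount, ← Fintype.card_coe]
  refine Fintype.card_congr ((Equiv.subtypeEquivRight fun r => ?_).trans
    ((Equiv.subtypeSubtypeEquivSubtypeInter (· ∈ R) (fun r => ∃ s ∈ C, p r = some s)).trans
      (Equiv.subtypeEquivRight fun r => ?_))) <;> simp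

variable [Fintype ι]

theorem cornerCount_filter_le (p : ι → Option ι) (r : ι) (C : Finset ι) :
    cornerCount p {x | r ≤ x} C =
      cornerCount p {x | r < x} C + if ∃ s ∈ C, p r = some s then 1 else 0 := by
  have : filter (r ≤ ·) univ = insert r (filter (r < ·) univ) := by
    ext x
    simp [le_iff_eq_or_lt, eq_comm]
  rw [cornerCount, cornerCount, this, filter_insert]
  split_ifs
  · rw [card_insert_of_notMem (by simp)]
  · rfl

theorem eq_of_cornerCount_eq {p q : ι → Option ι}
    (h : ∀ R C : Finset ι, IsUpperSet (R : Set ι) → IsLowerSet (C : Set ι) →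
      cornerCount p R C = cornerCount q R C) : p = q := by
  have hrow : ∀ r (C : Finset ι), IsLowerSet (C : Set ι) →
      ((∃ s ∈ C, p r = some s) ↔ ∃ s ∈ C, q r = some s) := by
    intro r C hC
    have h₁ := h {x | r ≤ x} C (by simpa [← Set.Ici_def] using isUpperSet_Ici r) hC
    have h₂ := h {x | r < x} C (by simpa [← Set.Ioi_def] using isUpperSet_Ioi r) hC
    rw [cornerCount_filter_le, cornerCount_filter_le, h₂] at h₁
    constructor <;> intro hx <;> by_contra hy <;> simp [hx, hy] at h₁
  funext r
  apply Option.ext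
  intro s
  have hle := hrow r {x | x ≤ s} (by simpa [← Set.Iic_def] using isLowerSet_Iic s)
  have hlt := hrow r {x | x < s} (by simpa [← Set.Iio_def] using isLowerSet_Iio s)
  simp only [mem_filter, mem_univ, true_and] at hle hlt
  rw [eq_some_iff_exists_le_and_not_exists_lt, eq_some_iff_exists_le_and_not_exists_lt, hle, hlt]

end CornerCount

section Reduction

variable {ι K : Type*} [Fintype ι] [LinearOrder ι] [Field K]

def colOp (j : ι) (c : ι → K) : Matrix ι ι K :=
  1 + of fun r t => if r = j then c t else 0

def rowOp (i : ι) (d : ι → K) : Matrix ι ι K :=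
  1 + of fun r t => if t = i then d r else 0

theorem mul_colOp_apply (M : Matrix ι ι K) (j : ι) (c : ι → K) (r t : ι) :
    (M * colOp j c) r t = M r t + M r j * c t := by
  rw [colOp, Matrix.mul_add, Matrix.mul_one, Matrix.add_apply, mul_apply]
  simp [mul_ite]

theorem rowOp_mul_apply (i : ι) (d : ι → K) (M : Matrix ι ι K) (r t : ι) :
    (rowOp i d * M) r t = M r t + d r * M i t := by
  rw [rowOp, Matrix.add_mul, Matrix.one_mul, Matrix.add_apply, mul_apply]
  simp [ite_mul]

theorem colOp_mem_borel {j : ι} {c : ι → K} (hc : ∀ t < j, c t = 0) (hcj : 1 + c j ≠ 0) :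
    colOp j c ∈ borel ι K := by
  have hUT : (colOp j c).IsUpperTriangular := by
    intro r t htr
    simp only [colOp, Matrix.add_apply, of_apply, one_apply_ne (ne_of_gt htr : r ≠ t), zero_add]
    split_ifs with h
    · exact hc t (h ▸ htr)
    · rfl
  refine ⟨hUT, (isUnit_iff_diag_ne_zero hUT).mpr fun r => ?_⟩
  simp only [colOp, Matrix.add_apply, of_apply, one_apply_eq]
  split_ifs with h
  · exact h ▸ hcj
  · simp

theorem rowOp_mem_borel {i : ι} {d : ι → K} (hd : ∀ r, i < r → d r = 0)
    (hdi : 1 + d i ≠ 0) :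
    rowOp i d ∈ borel ι K := by
  have hUT : (rowOp i d).IsUpperTriangular := by
    intro r t htr
    simp only [rowOp, Matrix.add_apply, of_apply, one_apply_ne (ne_of_gt htr : r ≠ t), zero_add]
    split_ifs with h
    · exact hd r (h ▸ htr)
    · rfl
  refine ⟨hUT, (isUnit_iff_diag_ne_zero hUT).mpr fun r => ?_⟩
  simp only [rowOp, Matrix.add_apply, of_apply, one_apply_eq]
  split_ifs with h
  · exact h ▸ hdi
  · simp

theorem exists_borel_clear_row {M : Matrix ι ι K} {i j : ι} (hij : M i j ≠ 0)
    (hleft : ∀ t < j, M i t = 0) :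
    ∃ B ∈ borel ι K, (∀ t, (M * B) i t = if t = j then 1 else 0) ∧
      (∀ r, (M * B) r j = M r j / M i j) ∧
      ∀ r t, t ≠ j → (t < j ∨ M r j = 0) → (M * B) r t = M r t := by
  set c : ι → K := fun t =>
    if t = j then (M i j)⁻¹ - 1 else if j < t then -(M i t / M i j) else 0
  have hc : ∀ t < j, c t = 0 := fun t ht => by simp [c, ht.ne, ht.not_gt]
  refine ⟨colOp j c, colOp_mem_borel hc (by simp [c, hij]), fun t => ?_, fun r => ?_,
    fun r t ht h => ?_⟩
  · rw [mul_colOp_apply]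
    rcases lt_trichotomy t j with htj | rfl | htj
    · simp [hleft t htj, hc t htj, htj.ne]
    · simp [c]
      field_simp
      ring
    · simp [c, htj, htj.ne']
      field_simp
      ring
  · rw [mul_colOp_apply]
    simp [c]
    field_simp
    ring
  · rw [mul_colOp_apply]
    rcases h with h | h
    · rw [hc t h, mul_zero, add_zero]
    · rw [h, zero_mul, add_zero]

theorem exists_borel_clear_column {N : Matrix ι ι K} {i j : ι}
    (hrow : ∀ t, N i t = if t = j then 1 else 0) (hbelow : ∀ r, i < r → N r j = 0) :
    ∃ A ∈ borel ι K, (∀ r, (A * N) r j = if r = i then 1 else 0) ∧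
      ∀ r t, t ≠ j → (A * N) r t = N r t := by
  set d : ι → K := fun r => if r < i then -N r j else 0
  refine ⟨rowOp i d, rowOp_mem_borel (fun r hr => by simp [d, hr.not_gt]) (by simp [d]),
    fun r => ?_, fun r t ht => ?_⟩
  · rw [rowOp_mul_apply, hrow]
    rcases lt_trichotomy r i with hri | rfl | hri
    · simp [d, hri, hri.ne]
    · simp [d, hrow]
    · simp [d, hri.ne', hri.not_gt, hbelow r hri]
  · rw [rowOp_mul_apply, hrow, if_neg ht, mul_zero, add_zero]

theorem exists_borel_clear_pivot {M : Matrix ι ι K} {i j : ι} (hij : M i j ≠ 0)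
    (hbelow : ∀ r, i < r → M r j = 0) (hleft : ∀ t < j, M i t = 0) :
    ∃ A ∈ borel ι K, ∃ B ∈ borel ι K,
      (∀ r, (A * M * B) r j = if r = i then 1 else 0) ∧ (∀ t ≠ j, (A * M * B) i t = 0) ∧
      ∀ r t, t ≠ j → (t < j ∨ M r j = 0) → (A * M * B) r t = M r t := by
  obtain ⟨B, hB, hrowB, hcolB, hrestB⟩ := exists_borel_clear_row hij hleft
  obtain ⟨A, hA, hcol, hrestA⟩ :=
    exists_borel_clear_column hrowB fun r hr => by rw [hcolB, hbelow r hr, zero_div]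
  refine ⟨A, hA, B, hB, ?_⟩
  simp only [Matrix.mul_assoc]
  refine ⟨hcol, fun t ht => by rw [hrestA i t ht, hrowB, if_neg ht], fun r t ht h => ?_⟩
  rw [hrestA r t ht, hrestB r t ht h]

def IsReducedColumn (M : Matrix ι ι K) (j : ι) : Prop :=
  ∀ i, M i j ≠ 0 → M i j = 1 ∧ (∀ r ≠ i, M r j = 0) ∧ ∀ t ≠ j, M i t = 0

theorem exists_borel_reduce_column {M : Matrix ι ι K} {j : ι}
    (hprev : ∀ s < j, IsReducedColumn M s) :
    ∃ A ∈ borel ι K, ∃ B ∈ borel ι K, ∀ s ≤ j, IsReducedColumn (A * M * B) s := by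
  classical
  by_cases hzero : ∀ r, M r j = 0
  · refine ⟨1, one_mem _, 1, one_mem _, fun s hs => ?_⟩
    rw [Matrix.one_mul, Matrix.mul_one]
    rcases hs.lt_or_eq with hs | rfl
    · exact hprev s hs
    · exact fun i hi => absurd (hzero i) hi
  obtain ⟨i, hi, hmax⟩ := exists_max_image {r | M r j ≠ 0} id
    (by simpa [Finset.Nonempty] using hzero)
  simp only [mem_filter, mem_univ, true_and, id] at hi hmax
  have hbelow : ∀ r, i < r → M r j = 0 := fun r hr => by_contra fun h => (hmax r h).not_gt hr
  -- a nonzero `M i t` with `t < j` would be a pivot, and its row vanishes at `j`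
  have hleft : ∀ t < j, M i t = 0 := fun t ht =>
    by_contra fun h => hi ((hprev t ht i h).2.2 j ht.ne')
  obtain ⟨A, hA, B, hB, hcol, hrow, hrest⟩ := exists_borel_clear_pivot hi hbelow hleft
  refine ⟨A, hA, B, hB, fun s hs => ?_⟩
  rcases hs.lt_or_eq with hs | rfl
  · have hsame : ∀ r, (A * M * B) r s = M r s := fun r => hrest r s hs.ne (Or.inl hs)
    intro r hr
    rw [hsame] at hr ⊢
    obtain ⟨hone, hcol', hrow'⟩ := hprev s hs r hr
    refine ⟨hone, fun r' hr' => (hsame r').trans (hcol' r' hr'), fun t ht => ?_⟩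
    rcases eq_or_ne t j with rfl | htj
    · rw [hcol, if_neg (show r ≠ i from fun h => hr (h ▸ hleft s hs))]
    · rw [hrest r t htj (Or.inr (hrow' _ hs.ne')), hrow' t ht]
  · intro r hr
    obtain rfl : r = i := by_contra fun h => hr (by rw [hcol, if_neg h])
    exact ⟨by rw [hcol, if_pos rfl], fun r' hr' => by rw [hcol, if_neg hr'], hrow⟩

theorem exists_borel_reduce (M : Matrix ι ι K) :
    ∃ A ∈ borel ι K, ∃ B ∈ borel ι K, ∀ s, IsReducedColumn (A * M * B) s := by
  suffices h : ∀ T : Finset ι, IsLowerSet (T : Set ι) →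
      ∃ A ∈ borel ι K, ∃ B ∈ borel ι K, ∀ s ∈ T, IsReducedColumn (A * M * B) s by
    obtain ⟨A, hA, B, hB, hred⟩ := h univ (by simp [isLowerSet_univ])
    exact ⟨A, hA, B, hB, fun s => hred s (mem_univ s)⟩
  intro T
  induction T using Finset.induction_on_max with
  | empty => exact fun _ => ⟨1, one_mem _, 1, one_mem _, by simp⟩
  | insert a T hlt ih =>
    intro hT
    have hbefore : ∀ s < a, s ∈ T := fun s hs =>
      (mem_insert.mp (hT hs.le (by simp))).resolve_left hs.ne
    obtain ⟨A, hA, B, hB, hred⟩ :=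
      ih fun x y hyx hx => hbefore y (hyx.trans_lt (hlt x hx))
    obtain ⟨A', hA', B', hB', hred'⟩ :=
      exists_borel_reduce_column fun s hs => hred s (hbefore s hs)
    refine ⟨A' * A, mul_mem hA' hA, B * B', mul_mem hB hB', fun s hs => ?_⟩
    rw [show A' * A * M * (B * B') = A' * (A * M * B) * B' by simp only [Matrix.mul_assoc]]
    exact hred' s ((mem_insert.mp hs).elim le_of_eq fun h => (hlt s h).le)

theorem exists_rookMatrix_eq_of_isReducedColumn {M : Matrix ι ι K} (hM : M.IsUpperTriangular)
    (hred : ∀ j, IsReducedColumn M j) : ∃ p, IsRookPlacement p ∧ rookMatrix K p = M := by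
  classical
  let p : ι → Option ι := fun i => if h : ∃ j, M i j ≠ 0 then some h.choose else none
  have hp : ∀ i j, p i = some j ↔ M i j ≠ 0 := by
    intro i j
    by_cases h : ∃ j, M i j ≠ 0
    · simp only [p, dif_pos h, Option.some.injEq]
      refine ⟨fun hj => hj ▸ h.choose_spec, fun hj => by_contra fun hne => ?_⟩
      exact h.choose_spec ((hred j i hj).2.2 _ hne)
    · simp only [p, dif_neg h, reduceCtorEq, false_iff]
      exact fun hj => h ⟨j, hj⟩
  refine ⟨p, ⟨fun i j h => not_lt.mp fun hji => (hp i j).mp h (hM hji),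
    fun i₁ i₂ j h₁ h₂ => by_contra fun hne => ?_⟩, ?_⟩
  · exact (hp i₂ j).mp h₂ ((hred j i₁ ((hp i₁ j).mp h₁)).2.1 i₂ (Ne.symm hne))
  · ext i j
    by_cases h : M i j = 0
    · simp [rookMatrix, hp, h]
    · simp [rookMatrix, (hp i j).mpr h, (hred j i h).1]

theorem exists_borel_mul_mul_eq_rookMatrix {M : Matrix ι ι K} (hM : M.IsUpperTriangular) :
    ∃ p, IsRookPlacement p ∧
      ∃ A ∈ borel ι K, ∃ B ∈ borel ι K, A * M * B = rookMatrix K p := by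
  obtain ⟨A, hA, B, hB, hred⟩ := exists_borel_reduce M
  obtain ⟨p, hp, hpM⟩ := exists_rookMatrix_eq_of_isReducedColumn ((hA.1.mul hM).mul hB.1) hred
  exact ⟨p, hp, A, hA, B, hB, hpM.symm⟩

end Reduction

section Orbits

variable {ι K : Type*} [Fintype ι] [LinearOrder ι] [Field K]

variable (ι K) in
def orbitRel (f g : {M : Matrix ι ι K // M.IsUpperTriangular}) : Prop :=
  ∃ h₁ h₂ : Matrix ι ι K,
    h₁.IsUpperTriangular ∧ IsUnit h₁ ∧ h₂.IsUpperTriangular ∧ IsUnit h₂ ∧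
    (g : Matrix ι ι K) = h₂ * (f : Matrix ι ι K) * h₁⁻¹

theorem card_quot_orbitRel :
    Nat.card (Quot (orbitRel ι K)) = Nat.card {p : ι → Option ι // IsRookPlacement p} := by
  let φ : {p : ι → Option ι // IsRookPlacement p} → Quot (orbitRel ι K) :=
    fun p => Quot.mk _ ⟨rookMatrix K p.1, isUpperTriangular_rookMatrix p.2⟩
  refine (Nat.card_eq_of_bijective φ ⟨fun p q hpq => Subtype.ext
    (eq_of_cornerCount_eq fun R C hR hC => ?_), fun x => ?_⟩).symm
  · have hinv : ∀ f g, orbitRel ι K f g → (corner f.1 R C).rank = (corner g.1 R C).rank := by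
      rintro f g ⟨h₁, h₂, hh₁, hu₁, hh₂, hu₂, hg⟩
      rw [hg, rank_corner_mul_mul ⟨hh₂, hu₂⟩ (inv_mem_borel ⟨hh₁, hu₁⟩) _ hR hC]
    rw [← rank_corner_rookMatrix (K := K) p.2.2, ← rank_corner_rookMatrix (K := K) q.2.2]
    exact congrArg (Quot.lift _ hinv) hpq
  · induction x using Quot.ind with
    | mk f =>
    obtain ⟨p, hp, A, hA, B, hB, hAB⟩ := exists_borel_mul_mul_eq_rookMatrix f.2
    refine ⟨⟨p, hp⟩, (Quot.sound ⟨B⁻¹, A, (inv_mem_borel hB).1, (inv_mem_borel hB).2,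
      hA.1, hA.2, ?_⟩).symm⟩
    rw [nonsing_inv_nonsing_inv B ((isUnit_iff_isUnit_det B).mp hB.2), hAB]

end Orbits

section Block

variable {α : Type*} [LinearOrder α]

def nextIn (S : Finset α) (x : α) : Option α :=
  if h : {y ∈ S | x < y}.Nonempty then some ({y ∈ S | x < y}.min' h) else none

theorem nextIn_eq_some_iff {S : Finset α} {x y : α} :
    nextIn S x = some y ↔ y ∈ S ∧ x < y ∧ ∀ z ∈ S, x < z → y ≤ z := by
  unfold nextIn
  split_ifs with h
  · have hm := min'_mem _ h
    simp only [mem_filter] at hm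
    rw [Option.some.injEq]
    constructor
    · rintro rfl
      exact ⟨hm.1, hm.2, fun z hz hxz => min'_le _ _ (mem_filter.mpr ⟨hz, hxz⟩)⟩
    · rintro ⟨hyS, hxy, hmin⟩
      exact le_antisymm (min'_le _ _ (mem_filter.mpr ⟨hyS, hxy⟩)) (hmin _ hm.1 hm.2)
  · simp only [false_iff]
    rintro ⟨hyS, hxy, -⟩
    exact h ⟨y, mem_filter.mpr ⟨hyS, hxy⟩⟩

theorem nextIn_eq_none_iff {S : Finset α} {x : α} :
    nextIn S x = none ↔ ∀ z ∈ S, ¬ x < z := by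
  unfold nextIn
  split_ifs with h <;> simpa [Finset.Nonempty] using h

theorem nextIn_injOn {S : Finset α} {x₁ x₂ y : α} (hx₁ : x₁ ∈ S) (hx₂ : x₂ ∈ S)
    (h₁ : nextIn S x₁ = some y) (h₂ : nextIn S x₂ = some y) : x₁ = x₂ := by
  rw [nextIn_eq_some_iff] at h₁ h₂
  rcases lt_trichotomy x₁ x₂ with h | h | h
  · exact absurd (h₁.2.2 _ hx₂ h) h₂.2.1.not_ge
  · exact h
  · exact absurd (h₂.2.2 _ hx₁ h) h₁.2.1.not_ge

variable (p : α → Option α)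

abbrev Reaches : α → α → Prop := ReflTransGen fun x y => p x = some y

variable {p}

theorem le_of_reaches (hp : IsArcDiagram p) {x y : α} (h : Reaches p x y) : x ≤ y := by
  induction h with
  | refl => exact le_rfl
  | tail _ hyz ih => exact ih.trans (hp.1 _ _ hyz).le

theorem reaches_pred (hp : IsArcDiagram p) {a x z : α} (ha : IsBot a) (hx : Reaches p a x)
    (hzx : p z = some x) : Reaches p a z := by
  rcases hx.cases_tail with rfl | ⟨w, hw, hwx⟩
  · exact absurd (ha z) (hp.1 _ _ hzx).not_ge
  · exact hp.2 hwx hzx ▸ hw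

theorem apply_eq_nextIn (hp : IsArcDiagram p) {a x : α} (hx : Reaches p a x)
    {S : Finset α} (hS : ∀ z, z ∈ S ↔ Reaches p a z) : p x = nextIn S x := by
  have hfirst : ∀ z ∈ S, x < z → ∃ y, p x = some y ∧ y ≤ z := by
    intro z hz hxz
    rcases ReflTransGen.total_of_right_unique (fun _ _ _ h₁ h₂ => Option.some_injective _
      (h₁.symm.trans h₂)) hx ((hS z).mp hz) with h | h
    · rcases h.cases_head with rfl | ⟨y, hxy, hyz⟩
      · exact absurd hxz (lt_irrefl x)
      · exact ⟨y, hxy, le_of_reaches hp hyz⟩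
    · exact absurd (le_of_reaches hp h) hxz.not_ge
  cases hpx : p x with
  | none =>
    refine (nextIn_eq_none_iff.mpr fun z hz hxz => ?_).symm
    obtain ⟨y, hy, -⟩ := hfirst z hz hxz
    exact absurd (hpx.symm.trans hy) (by simp)
  | some y =>
    refine (nextIn_eq_some_iff.mpr
      ⟨(hS y).mpr (hx.tail hpx), hp.1 _ _ hpx, fun z hz hxz => ?_⟩).symm
    obtain ⟨y', hy', hy'z⟩ := hfirst z hz hxz
    exact (Option.some_injective _ (hpx.symm.trans hy')) ▸ hy'z

theorem reaches_iff_of_forall_mem [Finite α] {a : α} (ha : IsBot a) {S : Finset α}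
    (haS : a ∈ S) (hS : ∀ x ∈ S, p x = nextIn S x) (z : α) : Reaches p a z ↔ z ∈ S := by
  constructor
  · intro h
    induction h with
    | refl => exact haS
    | tail _ hyz ih => exact (nextIn_eq_some_iff.mp ((hS _ ih).symm.trans hyz)).1
  · intro hz
    induction z using WellFoundedLT.induction with
    | _ z ih =>
    rcases (ha z).eq_or_lt with rfl | haz
    · exact ReflTransGen.refl
    have hne : {w ∈ S | w < z}.Nonempty := ⟨a, mem_filter.mpr ⟨haS, haz⟩⟩
    obtain ⟨hwS, hwz⟩ := mem_filter.mp (max'_mem _ hne)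
    have hnext : p ({w ∈ S | w < z}.max' hne) = some z := by
      rw [hS _ hwS, nextIn_eq_some_iff]
      exact ⟨hz, hwz, fun y hy hwy => not_lt.mp fun hyz =>
        hwy.not_ge (le_max' _ _ (mem_filter.mpr ⟨hy, hyz⟩))⟩
    exact (ih _ hwz hwS).tail hnext

variable (V : Finset α)

def restrictArcs (p : α → Option α) (x : V) : Option V :=
  (p x).bind fun y => if h : y ∈ V then some ⟨y, h⟩ else none

variable {V}

theorem restrictArcs_eq_some {p : α → Option α} {x y : V} :
    restrictArcs V p x = some y ↔ p x = some y := by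
  simp [restrictArcs, Option.bind_eq_some_iff]

theorem isArcDiagram_restrictArcs {p : α → Option α} (hp : IsArcDiagram p) :
    IsArcDiagram (restrictArcs V p) :=
  ⟨fun _ _ h => hp.1 _ _ (restrictArcs_eq_some.mp h),
    fun _ _ _ h₁ h₂ =>
      Subtype.ext (hp.2 (restrictArcs_eq_some.mp h₁) (restrictArcs_eq_some.mp h₂))⟩

end Block

section Count

open Classical in
noncomputable def block {α : Type*} [Fintype α] (p : α → Option α) (a : α) : Finset α :=
  {z | Reaches p a z}

theorem mem_block {α : Type*} [Fintype α] {p : α → Option α} {a z : α} :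
    z ∈ block p a ↔ Reaches p a z := by
  simp [block]

variable {α : Type*} [Fintype α] [LinearOrder α] (V : Finset α)

def extendArcs (q : V → Option V) (x : α) : Option α :=
  if h : x ∈ V then (q ⟨x, h⟩).map (↑) else nextIn Vᶜ x

variable {V}

theorem extendArcs_eq_some {q : V → Option V} {x y : α} :
    extendArcs V q x = some y ↔
      (∃ (hx : x ∈ V) (hy : y ∈ V), q ⟨x, hx⟩ = some ⟨y, hy⟩) ∨
        (x ∉ V ∧ nextIn Vᶜ x = some y) := by
  unfold extendArcs
  split_ifs with hx
  · simp only [hx, exists_true_left, not_true_eq_false, false_and, or_false]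
    rcases q ⟨x, hx⟩ with _ | ⟨z, hz⟩
    · simp
    · simp only [Option.map_some, Option.some.injEq, Subtype.mk.injEq]
      exact ⟨fun h => ⟨h ▸ hz, h⟩, fun ⟨_, h⟩ => h⟩
  · simp [hx]

theorem isArcDiagram_extendArcs {q : V → Option V} (hq : IsArcDiagram q) :
    IsArcDiagram (extendArcs V q) := by
  refine ⟨fun x y h => ?_, fun x₁ x₂ y h₁ h₂ => ?_⟩
  · rcases extendArcs_eq_some.mp h with ⟨hx, hy, h⟩ | ⟨-, h⟩
    · exact hq.1 _ _ h
    · exact (nextIn_eq_some_iff.mp h).2.1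
  · rcases extendArcs_eq_some.mp h₁ with ⟨hx₁, hy, h₁⟩ | ⟨hx₁, h₁⟩ <;>
      rcases extendArcs_eq_some.mp h₂ with ⟨hx₂, hy', h₂⟩ | ⟨hx₂, h₂⟩
    · exact congrArg Subtype.val (hq.2 h₁ h₂)
    · exact absurd hy (mem_compl.mp (nextIn_eq_some_iff.mp h₂).1)
    · exact absurd hy' (mem_compl.mp (nextIn_eq_some_iff.mp h₁).1)
    · exact nextIn_injOn (mem_compl.mpr hx₁) (mem_compl.mpr hx₂) h₁ h₂

theorem block_extendArcs {a : α} (ha : IsBot a) (haV : a ∉ V) (q : V → Option V) :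
    block (extendArcs V q) a = Vᶜ := by
  ext z
  rw [mem_block]
  exact reaches_iff_of_forall_mem ha (mem_compl.mpr haV)
    (fun x hx => dif_neg (mem_compl.mp hx)) z

theorem restrictArcs_extendArcs (q : V → Option V) : restrictArcs V (extendArcs V q) = q := by
  funext x
  apply Option.ext
  intro y
  rw [restrictArcs_eq_some, extendArcs, dif_pos x.2]
  rcases q x with _ | z <;> simp

theorem extendArcs_restrictArcs {p : α → Option α} (hp : IsArcDiagram p) {a : α} (ha : IsBot a)
    (hV : block p a = Vᶜ) : extendArcs V (restrictArcs V p) = p := by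
  funext x
  by_cases hx : x ∈ V
  · rw [extendArcs, dif_pos hx]
    cases hpx : p x with
    | none => simp [restrictArcs, hpx]
    | some y =>
      have hy : y ∈ V := by
        by_contra hy
        rw [← mem_compl, ← hV, mem_block] at hy
        exact mem_compl.mp (hV ▸ mem_block.mpr (reaches_pred hp ha hy hpx)) hx
      simp [restrictArcs, hpx, hy]
  · rw [extendArcs, dif_neg hx, ← hV]
    exact (apply_eq_nextIn hp (mem_block.mp (hV ▸ mem_compl.mpr hx)) fun z => mem_block).symm

def blockFiberEquiv {a : α} (ha : IsBot a) (haV : a ∉ V) :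
    {p : ArcDiagrams α // block p.1 a = Vᶜ} ≃ ArcDiagrams V where
  toFun p := ⟨restrictArcs V p.1.1, isArcDiagram_restrictArcs p.1.2⟩
  invFun q := ⟨⟨extendArcs V q.1, isArcDiagram_extendArcs q.2⟩, block_extendArcs ha haV q.1⟩
  left_inv p := Subtype.ext (Subtype.ext (extendArcs_restrictArcs p.1.2 ha p.2))
  right_inv q := Subtype.ext (restrictArcs_extendArcs q.1)

theorem card_arcDiagrams_eq_sum {a : α} (ha : IsBot a) :
    Nat.card (ArcDiagrams α) = ∑ V ∈ (univ.erase a).powerset, Nat.card (ArcDiagrams V) := by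
  let f : ArcDiagrams α → (univ.erase a).powerset := fun p =>
    ⟨(block p.1 a)ᶜ, mem_powerset.mpr fun x hx => mem_erase.mpr
      ⟨fun h => mem_compl.mp hx (h ▸ mem_block.mpr ReflTransGen.refl), mem_univ x⟩⟩
  rw [← sum_coe_sort, Nat.card_congr (Equiv.sigmaFiberEquiv f).symm, Nat.card_sigma]
  refine sum_congr rfl fun V _ => Nat.card_congr ((Equiv.subtypeEquivRight fun p => ?_).trans
    (blockFiberEquiv ha fun h => (mem_erase.mp (mem_powerset.mp V.2 h)).1 rfl))
  rw [Subtype.ext_iff, compl_eq_comm, eq_comm]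

end Count

theorem card_arcDiagrams {b : ℕ → ℕ} (hb0 : b 0 = 1)
    (hb : ∀ m, b (m + 1) = ∑ k ∈ range (m + 1), m.choose k * b k)
    (α : Type*) [Fintype α] [LinearOrder α] :
    Nat.card (ArcDiagrams α) = b (Fintype.card α) := by
  induction h : Fintype.card α using Nat.strong_induction_on generalizing α with
  | _ N ih =>
  rcases N with _ | M
  · have : IsEmpty α := Fintype.card_eq_zero_iff.mp h
    rw [hb0, Nat.card_eq_one_iff_unique]
    exact ⟨⟨fun p q => Subtype.ext (funext isEmptyElim)⟩,
      ⟨⟨isEmptyElim, fun i => isEmptyElim i, fun i => isEmptyElim i⟩⟩⟩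
  have hne : (univ : Finset α).Nonempty :=
    univ_nonempty_iff.mpr (Fintype.card_pos_iff.mp (by omega))
  have ha : IsBot (univ.min' hne) := fun x => min'_le _ x (mem_univ x)
  have hcard : #(univ.erase (univ.min' hne)) = M := by
    rw [card_erase_of_mem (mem_univ _), card_univ, h, Nat.add_sub_cancel]
  rw [card_arcDiagrams_eq_sum ha, hb M, ← hcard]
  simp only [← smul_eq_mul, ← sum_powerset_apply_card]
  refine sum_congr rfl fun V hV => ?_
  have hV : #V ≤ M := hcard ▸ card_le_card (mem_powerset.mp hV)
  rw [ih #V (by omega) V (Fintype.card_coe V)]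

section Shift

variable {n : ℕ}

def rookToArc (p : Fin (n + 1) → Option (Fin (n + 1))) : Fin (n + 2) → Option (Fin (n + 2)) :=
  Fin.lastCases none fun i => (p i).map Fin.succ

def arcToRook (q : Fin (n + 2) → Option (Fin (n + 2))) : Fin (n + 1) → Option (Fin (n + 1)) :=
  fun i => (q i.castSucc).bind (Fin.cases none some)

theorem rookToArc_eq_some {p : Fin (n + 1) → Option (Fin (n + 1))} {x y : Fin (n + 2)} :
    rookToArc p x = some y ↔ ∃ i j, x = i.castSucc ∧ y = j.succ ∧ p i = some j := by
  induction x using Fin.lastCases with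
  | last =>
    simp only [rookToArc, Fin.lastCases_last, reduceCtorEq, false_iff, not_exists, not_and]
    exact fun i _ h => absurd h (Fin.castSucc_lt_last i).ne'
  | cast i =>
    simp only [rookToArc, Fin.lastCases_castSucc, Option.map_eq_some_iff, Fin.castSucc_inj,
      exists_and_left, exists_eq_left']
    exact exists_congr fun j => and_comm.trans (and_congr_left' eq_comm)

theorem arcToRook_eq_some {q : Fin (n + 2) → Option (Fin (n + 2))} {i j : Fin (n + 1)} :
    arcToRook q i = some j ↔ q i.castSucc = some j.succ := by
  simp only [arcToRook, Option.bind_eq_some_iff]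
  constructor
  · rintro ⟨y, hy, hyj⟩
    induction y using Fin.cases with
    | zero => simp at hyj
    | succ k => simp_all
  · exact fun h => ⟨_, h, by simp⟩

def rookArcEquiv (n : ℕ) :
    {p : Fin (n + 1) → Option (Fin (n + 1)) // IsRookPlacement p} ≃
      ArcDiagrams (Fin (n + 2)) where
  toFun p := ⟨rookToArc p.1, by
    refine ⟨fun x y h => ?_, fun x₁ x₂ y h₁ h₂ => ?_⟩
    · obtain ⟨i, j, rfl, rfl, hij⟩ := rookToArc_eq_some.mp h
      exact Fin.castSucc_lt_succ_iff.mpr (p.2.1 i j hij)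
    · obtain ⟨i₁, j₁, rfl, rfl, hi₁⟩ := rookToArc_eq_some.mp h₁
      obtain ⟨i₂, j₂, rfl, hj, hi₂⟩ := rookToArc_eq_some.mp h₂
      rw [Fin.succ_inj.mp hj] at hi₁
      rw [p.2.2 hi₁ hi₂]⟩
  invFun q := ⟨arcToRook q.1, by
    refine ⟨fun i j h => ?_, fun i₁ i₂ j h₁ h₂ => ?_⟩
    · exact Fin.castSucc_lt_succ_iff.mp (q.2.1 _ _ (arcToRook_eq_some.mp h))
    · exact Fin.castSucc_injective _
        (q.2.2 (arcToRook_eq_some.mp h₁) (arcToRook_eq_some.mp h₂))⟩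
  left_inv p := by
    ext i j
    simp only [arcToRook_eq_some, rookToArc, Fin.lastCases_castSucc,
      Option.map_eq_some_iff, Fin.succ_inj, exists_eq_right]
  right_inv q := by
    ext x y
    change rookToArc (arcToRook q.1) x = some y ↔ q.1 x = some y
    rw [rookToArc_eq_some]
    refine ⟨fun ⟨i, j, hx, hy, h⟩ => hx ▸ hy ▸ arcToRook_eq_some.mp h, fun h => ?_⟩
    have hxy := q.2.1 x y h
    obtain ⟨i, rfl⟩ := Fin.exists_castSucc_eq.mpr (hxy.trans_le (Fin.le_last y)).ne
    obtain ⟨j, rfl⟩ :=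
      Fin.exists_succ_eq.mpr (Fin.pos_iff_ne_zero.mp ((Fin.zero_le _).trans_lt hxy))
    exact ⟨i, j, rfl, rfl, arcToRook_eq_some.mpr h⟩

end Shift

end UpperTriangularOrbits

/-- the number of orbits of the action `(h₁,h₂) · f = h₂ f h₁⁻¹`
of `B_{n+1} × B_{n+1}` on upper-triangular matrices is the Bell number `b_{n+2}`,
where `b_0 = 1` and `b_{m+1} = ∑_{k=0}^m C(m,k) b_k`. -/
theorem stmt6 (n : ℕ) (b : ℕ → ℕ) (hb0 : b 0 = 1)
    (hb : ∀ m, b (m+1) = ∑ k ∈ Finset.range (m+1), Nat.choose m k * b k) :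
    Nat.card (Quot (fun f g : {M : Matrix (Fin (n+1)) (Fin (n+1)) ℂ // UT n M} =>
      ∃ h₁ h₂ : Matrix (Fin (n+1)) (Fin (n+1)) ℂ,
        UT n h₁ ∧ IsUnit h₁ ∧ UT n h₂ ∧ IsUnit h₂ ∧
          (g : Matrix (Fin (n+1)) (Fin (n+1)) ℂ) = h₂ * (f : Matrix (Fin (n+1)) (Fin (n+1)) ℂ) * h₁⁻¹))
      = b (n + 2) := by
  -- with `UT n` unfolded, the quotient is by `orbitRel (Fin (n + 1)) ℂ`
  have hcount := UpperTriangularOrbits.card_arcDiagrams hb0 hb (Fin (n + 2))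
  rw [Fintype.card_fin, ← Nat.card_congr (UpperTriangularOrbits.rookArcEquiv n)] at hcount
  exact (UpperTriangularOrbits.card_quot_orbitRel (ι := Fin (n + 1)) (K := ℂ)).trans hcount
end

section
/- The number of upper-triangular partial permutation matrices of size (n+1)×(n+1) equals the Bell number b_{n+2}. -/
open Finset

noncomputable section
open Classical

/-- strict partial injection supported on `S` -/
def PStrict (S : Finset ℕ) (σ : ℕ → Option ℕ) : Prop :=
  (∀ y z, σ y = some z → y ∈ S ∧ z ∈ S ∧ y < z) ∧
  (∀ y y' z, σ y = some z → σ y' = some z → y = y')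

/-- weak partial injection supported on `S` -/
def PWeak (S : Finset ℕ) (σ : ℕ → Option ℕ) : Prop :=
  (∀ y z, σ y = some z → y ∈ S ∧ z ∈ S ∧ y ≤ z) ∧
  (∀ y y' z, σ y = some z → σ y' = some z → y = y')

lemma pmap_val {p : ℕ → Prop} (o : Option ℕ) (H : ∀ a ∈ o, p a) :
    Option.map Subtype.val (o.pmap (fun z hz => (⟨z, hz⟩ : {z // p z})) H) = o := by
  cases o <;> rfl

lemma finite_aux (S : Finset ℕ) (P : (ℕ → Option ℕ) → Prop)
    (hP : ∀ σ, P σ → ∀ y z, σ y = some z → y ∈ S ∧ z ∈ S) :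
    Finite {σ : ℕ → Option ℕ // P σ} := by
  let f : {σ : ℕ → Option ℕ // P σ} → (S → Option S) := fun σ y =>
    (σ.1 y).pmap (fun z hz => (⟨z, hz⟩ : S)) (fun z hz => (hP σ.1 σ.2 y z hz).2)
  apply Finite.of_injective f
  intro σ σ' h
  ext1; funext y
  by_cases hy : y ∈ S
  · have h1 : σ.1 y = Option.map Subtype.val (f σ ⟨y, hy⟩) := (pmap_val _ _).symm
    have h2 : σ'.1 y = Option.map Subtype.val (f σ' ⟨y, hy⟩) := (pmap_val _ _).symm
    rw [h1, h2, h]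
  · cases h1 : σ.1 y with
    | none => cases h2 : σ'.1 y with
      | none => rfl
      | some z => exact absurd (hP σ'.1 σ'.2 y z h2).1 hy
    | some z => exact absurd (hP σ.1 σ.2 y z h1).1 hy

instance finStrict (S : Finset ℕ) : Finite {σ : ℕ → Option ℕ // PStrict S σ} :=
  finite_aux S _ (fun σ hσ y z h => ⟨(hσ.1 y z h).1, (hσ.1 y z h).2.1⟩)

instance finWeak (S : Finset ℕ) : Finite {σ : ℕ → Option ℕ // PWeak S σ} :=
  finite_aux S _ (fun σ hσ y z h => ⟨(hσ.1 y z h).1, (hσ.1 y z h).2.1⟩)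

lemma natcard_sigma {ι : Type} [Fintype ι] (f : ι → Type) [∀ i, Finite (f i)] :
    Nat.card (Σ i, f i) = ∑ i, Nat.card (f i) := by
  haveI := fun i => Fintype.ofFinite (f i)
  simp [Nat.card_eq_fintype_card, Fintype.card_sigma]

/-- B1: a weak partial injection is (fixed point set, strict partial injection on the rest). -/
def eqWeak (S : Finset ℕ) :
    {σ : ℕ → Option ℕ // PWeak S σ} ≃
      Σ F : ↥S.powerset, {τ : ℕ → Option ℕ // PStrict (S \ F.1) τ} where
  toFun σ := by
    refine ⟨⟨S.filter (fun y => σ.1 y = some y), mem_powerset.2 (filter_subset _ _)⟩,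
      ⟨fun y => if σ.1 y = some y then none else σ.1 y, ?_, ?_⟩⟩
    · intro y z h
      simp only at h
      split_ifs at h with hfix
      obtain ⟨hyS, hzS, hyz⟩ := σ.2.1 y z h
      have hne : y ≠ z := fun he => hfix (he ▸ h)
      refine ⟨?_, ?_, lt_of_le_of_ne hyz hne⟩
      · simp only [mem_sdiff, mem_filter]
        exact ⟨hyS, fun hc => hfix hc.2⟩
      · simp only [mem_sdiff, mem_filter]
        refine ⟨hzS, fun hc => ?_⟩
        exact hne (σ.2.2 y z z h hc.2)
    · intro y y' z h h'
      simp only at h h'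
      split_ifs at h h'
      exact σ.2.2 y y' z h h'
  invFun p := by
    refine ⟨fun y => if y ∈ p.1.1 then some y else p.2.1 y, ?_, ?_⟩
    · intro y z h
      simp only at h
      split_ifs at h with hF
      · cases h
        have hyS : y ∈ S := mem_powerset.1 p.1.2 hF
        exact ⟨hyS, hyS, le_refl y⟩
      · obtain ⟨hy, hz, hlt⟩ := p.2.2.1 y z h
        rw [mem_sdiff] at hy hz
        exact ⟨hy.1, hz.1, le_of_lt hlt⟩
    · intro y y' z h h'
      simp only at h h'
      split_ifs at h h' with h1 h2 h2
      · cases h; cases h'; rfl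
      · cases h
        obtain ⟨_, hz, _⟩ := p.2.2.1 y' y h'
        rw [mem_sdiff] at hz
        exact absurd h1 hz.2
      · cases h'
        obtain ⟨_, hz, _⟩ := p.2.2.1 y y' h
        rw [mem_sdiff] at hz
        exact absurd h2 hz.2
      · exact p.2.2.2 y y' z h h'
  left_inv σ := by
    ext1; funext y
    by_cases hfix : σ.1 y = some y
    · simp only [mem_filter, hfix]
      have hyS : y ∈ S := (σ.2.1 y y hfix).1
      simp [hyS, hfix]
    · simp [mem_filter, hfix]
  right_inv p := by
    obtain ⟨⟨F, hF⟩, τ⟩ := p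
    have hFS : F ⊆ S := mem_powerset.1 hF
    have hτnone : ∀ y ∈ F, τ.1 y = none := by
      intro y hy
      cases hc : τ.1 y with
      | none => rfl
      | some z =>
        obtain ⟨hy', _, _⟩ := τ.2.1 y z hc
        rw [mem_sdiff] at hy'
        exact absurd hy hy'.2
    have hFeq : S.filter (fun y =>
        (if y ∈ F then some y else τ.1 y) = some y) = F := by
      ext y
      simp only [mem_filter]
      constructor
      · rintro ⟨hyS, hy⟩
        by_contra hyF
        rw [if_neg hyF] at hy
        obtain ⟨_, _, hlt⟩ := τ.2.1 y y hy
        exact lt_irrefl y hlt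
      · intro hyF
        exact ⟨hFS hyF, by rw [if_pos hyF]⟩
    refine Sigma.subtype_ext (Subtype.ext hFeq) ?_
    · funext y
      by_cases hyF : y ∈ F
      · simp [hyF, hτnone y hyF]
      · by_cases hfix : τ.1 y = some y
        · obtain ⟨_, _, hlt⟩ := τ.2.1 y y hfix
          exact absurd hlt (lt_irrefl y)
        · simp [hyF, hfix]

section Chain

variable (S : Finset ℕ) (hS : S.Nonempty) (σ : ℕ → Option ℕ)

/-- iterates of σ starting from the minimum of S -/
def iter : ℕ → Option ℕ :=
  fun k => (fun o => Option.bind o σ)^[k] (some (S.min' hS))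

lemma iter_zero : iter S hS σ 0 = some (S.min' hS) := rfl

lemma iter_succ (k : ℕ) : iter S hS σ (k+1) = (iter S hS σ k).bind σ := by
  unfold iter
  rw [Function.iterate_succ_apply']

variable {S hS σ}

lemma iter_mem (hσ : PStrict S σ) {k : ℕ} {y : ℕ} (h : iter S hS σ k = some y) : y ∈ S := by
  cases k with
  | zero => rw [iter_zero] at h; cases h; exact S.min'_mem hS
  | succ k =>
    rw [iter_succ] at h
    cases hw : iter S hS σ k with
    | none => rw [hw] at h; simp at h
    | some w =>
      rw [hw] at h
      simp only [Option.bind_some] at h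
      exact (hσ.1 w y h).2.1

lemma iter_none {k j : ℕ} (h : iter S hS σ k = none) (hkj : k ≤ j) : iter S hS σ j = none := by
  induction j with
  | zero => exact (Nat.le_zero.1 hkj) ▸ h
  | succ j ih =>
    rcases Nat.lt_or_ge k (j+1) with hlt | hge
    · have := ih (by omega)
      rw [iter_succ, this]; rfl
    · have : k = j + 1 := le_antisymm hkj hge
      exact this ▸ h

lemma iter_lt (hσ : PStrict S σ) {k a : ℕ} (ha : iter S hS σ k = some a) :
    ∀ {j b : ℕ}, k < j → iter S hS σ j = some b → a < b := by
  intro j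
  induction j with
  | zero => intro b h; omega
  | succ j ih =>
    intro b hkj hb
    rw [iter_succ] at hb
    cases hw : iter S hS σ j with
    | none => rw [hw] at hb; simp at hb
    | some w =>
      rw [hw] at hb
      simp only [Option.bind_some] at hb
      have hwb : w < b := (hσ.1 w b hb).2.2
      rcases Nat.lt_or_ge k j with h1 | h1
      · exact lt_trans (ih h1 hw) hwb
      · have hkeq : k = j := by omega
        subst hkeq
        rw [ha] at hw; cases hw
        exact hwb

variable (S hS σ)

/-- the chain of the minimum element -/
def chain : Finset ℕ := S.filter (fun y => ∃ k, iter S hS σ k = some y)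

variable {S hS σ}

lemma min'_mem_chain : S.min' hS ∈ chain S hS σ :=
  Finset.mem_filter.2 ⟨S.min'_mem hS, 0, rfl⟩

lemma chain_subset : chain S hS σ ⊆ S := Finset.filter_subset _ _

lemma chain_succ (hσ : PStrict S σ) {y z : ℕ} (hy : y ∈ chain S hS σ) (h : σ y = some z) :
    z ∈ chain S hS σ := by
  obtain ⟨hyS, k, hk⟩ := Finset.mem_filter.1 hy
  refine Finset.mem_filter.2 ⟨(hσ.1 y z h).2.1, k+1, ?_⟩
  rw [iter_succ, hk, Option.bind_some, h]

lemma chain_pred (hσ : PStrict S σ) {z : ℕ} (hz : z ∈ chain S hS σ) (hne : z ≠ S.min' hS) :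
    ∃ w ∈ chain S hS σ, σ w = some z := by
  obtain ⟨hzS, k, hk⟩ := Finset.mem_filter.1 hz
  cases k with
  | zero => rw [iter_zero] at hk; cases hk; exact absurd rfl hne
  | succ k =>
    rw [iter_succ] at hk
    cases hw : iter S hS σ k with
    | none => rw [hw] at hk; simp at hk
    | some w =>
      rw [hw] at hk
      simp only [Option.bind_some] at hk
      exact ⟨w, Finset.mem_filter.2 ⟨iter_mem hσ hw, k, hw⟩, hk⟩

end Chain

/-- successor function within a finset -/
def nxt (C : Finset ℕ) (y : ℕ) : Option ℕ :=
  if h : (C.filter (fun c => y < c)).Nonempty then some ((C.filter (fun c => y < c)).min' h)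
  else none

lemma nxt_eq_some {C : Finset ℕ} {y z : ℕ} :
    nxt C y = some z ↔ z ∈ C ∧ y < z ∧ ∀ c ∈ C, y < c → z ≤ c := by
  unfold nxt
  split_ifs with h
  · simp only [Option.some.injEq]
    constructor
    · rintro rfl
      have hm := Finset.min'_mem _ h
      rw [Finset.mem_filter] at hm
      exact ⟨hm.1, hm.2, fun c hc hyc => Finset.min'_le _ c (Finset.mem_filter.2 ⟨hc, hyc⟩)⟩
    · rintro ⟨hzC, hyz, hmin⟩
      apply le_antisymm
      · exact Finset.min'_le _ z (Finset.mem_filter.2 ⟨hzC, hyz⟩)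
      · have hm := Finset.min'_mem _ h
        rw [Finset.mem_filter] at hm
        exact hmin _ hm.1 hm.2
  · simp only [reduceCtorEq, false_iff]
    rintro ⟨hzC, hyz, -⟩
    exact h ⟨z, Finset.mem_filter.2 ⟨hzC, hyz⟩⟩

lemma nxt_eq_none {C : Finset ℕ} {y : ℕ} :
    nxt C y = none ↔ ∀ c ∈ C, ¬ y < c := by
  unfold nxt
  split_ifs with h
  · simp only [reduceCtorEq, false_iff]
    push_neg
    obtain ⟨c, hc⟩ := h
    rw [Finset.mem_filter] at hc
    exact ⟨c, hc.1, hc.2⟩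
  · simp only [true_iff]
    intro c hc hyc
    exact h ⟨c, Finset.mem_filter.2 ⟨hc, hyc⟩⟩

lemma iter_le {S : Finset ℕ} {hS : S.Nonempty} {σ : ℕ → Option ℕ} (hσ : PStrict S σ)
    {k j a b : ℕ} (hkj : k ≤ j) (ha : iter S hS σ k = some a) (hb : iter S hS σ j = some b) :
    a ≤ b := by
  rcases Nat.lt_or_ge k j with h | h
  · exact le_of_lt (iter_lt hσ ha h hb)
  · have : k = j := by omega
    subst this; rw [ha] at hb; cases hb; rfl

/-- removing the chain leaves a strict partial injection off the chain -/
lemma fwd_tau {S : Finset ℕ} {hS : S.Nonempty} {σ : ℕ → Option ℕ} (hσ : PStrict S σ) :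
    PStrict (S \ chain S hS σ) (fun y => if y ∈ chain S hS σ then none else σ y) := by
  constructor
  · intro y z h
    simp only at h
    split_ifs at h with hyc
    obtain ⟨hyS, hzS, hyz⟩ := hσ.1 y z h
    refine ⟨Finset.mem_sdiff.2 ⟨hyS, hyc⟩, Finset.mem_sdiff.2 ⟨hzS, ?_⟩, hyz⟩
    intro hzc
    by_cases hzx : z = S.min' hS
    · subst hzx
      exact absurd hyz (not_lt.2 (S.min'_le y hyS))
    · obtain ⟨w, hwc, hw⟩ := chain_pred hσ hzc hzx
      exact hyc ((hσ.2 y w z h hw) ▸ hwc)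
  · intro y y' z h h'
    simp only at h h'
    split_ifs at h h'
    exact hσ.2 y y' z h h'

/-- gluing a chain on C = insert x A with τ off it gives a strict partial injection -/
lemma bwd_sigma {S : Finset ℕ} (hS : S.Nonempty) {C : Finset ℕ} (hCS : C ⊆ S)
    (hxC : S.min' hS ∈ C) {τ : ℕ → Option ℕ} (hτ : PStrict (S \ C) τ) :
    PStrict S (fun y => if y ∈ C then nxt C y else τ y) := by
  constructor
  · intro y z h
    simp only at h
    split_ifs at h with hyC
    · obtain ⟨hzC, hyz, -⟩ := nxt_eq_some.1 h
      exact ⟨hCS hyC, hCS hzC, hyz⟩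
    · obtain ⟨hy, hz, hyz⟩ := hτ.1 y z h
      exact ⟨(Finset.mem_sdiff.1 hy).1, (Finset.mem_sdiff.1 hz).1, hyz⟩
  · intro y y' z h h'
    simp only at h h'
    split_ifs at h h' with h1 h2 h2
    · -- both via nxt: y and y' are both the predecessor of z in C
      obtain ⟨hzC, hyz, hmin⟩ := nxt_eq_some.1 h
      obtain ⟨_, hyz', hmin'⟩ := nxt_eq_some.1 h'
      by_contra hne
      rcases lt_trichotomy y y' with hlt | heq | hlt
      · exact absurd (hmin y' h2 hlt) (not_le.2 hyz')
      · exact hne heq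
      · exact absurd (hmin' y h1 hlt) (not_le.2 hyz)
    · obtain ⟨hzC, -, -⟩ := nxt_eq_some.1 h
      obtain ⟨-, hz, -⟩ := hτ.1 y' z h'
      exact absurd hzC (Finset.mem_sdiff.1 hz).2
    · obtain ⟨hzC, -, -⟩ := nxt_eq_some.1 h'
      obtain ⟨-, hz, -⟩ := hτ.1 y z h
      exact absurd hzC (Finset.mem_sdiff.1 hz).2
    · exact hτ.2 y y' z h h'

/-- the chain of the glued map is exactly C -/
lemma chain_bwd {S : Finset ℕ} (hS : S.Nonempty) {C : Finset ℕ} (hCS : C ⊆ S)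
    (hxC : S.min' hS ∈ C) {τ : ℕ → Option ℕ} (hτ : PStrict (S \ C) τ) :
    chain S hS (fun y => if y ∈ C then nxt C y else τ y) = C := by
  set σ' : ℕ → Option ℕ := fun y => if y ∈ C then nxt C y else τ y with hσ'def
  have key : ∀ k y, iter S hS σ' k = some y → y ∈ C := by
    intro k
    induction k with
    | zero => intro y h; rw [iter_zero] at h; cases h; exact hxC
    | succ k ih =>
      intro y h
      rw [iter_succ] at h
      cases hw : iter S hS σ' k with
      | none => rw [hw] at h; simp at h
      | some w =>
        rw [hw] at h
        simp only [Option.bind_some] at h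
        have hwC : w ∈ C := ih w hw
        rw [hσ'def] at h
        simp only [if_pos hwC] at h
        exact (nxt_eq_some.1 h).1
  apply Finset.Subset.antisymm
  · intro y hy
    obtain ⟨hyS, k, hk⟩ := Finset.mem_filter.1 hy
    exact key k y hk
  · intro y
    induction y using Nat.strong_induction_on with
    | _ y ih =>
      intro hyC
      by_cases hyx : y = S.min' hS
      · subst hyx; exact min'_mem_chain
      · have hyS : y ∈ S := hCS hyC
        have hxy : S.min' hS < y := lt_of_le_of_ne (S.min'_le y hyS) (Ne.symm hyx)
        have hD : (C.filter (fun c => c < y)).Nonempty :=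
          ⟨S.min' hS, Finset.mem_filter.2 ⟨hxC, hxy⟩⟩
        set w := (C.filter (fun c => c < y)).max' hD with hwdef
        have hwmem := Finset.max'_mem _ hD
        rw [← hwdef] at hwmem
        rw [Finset.mem_filter] at hwmem
        obtain ⟨hwC, hwy⟩ := hwmem
        have hnxt : nxt C w = some y := by
          refine nxt_eq_some.2 ⟨hyC, hwy, ?_⟩
          intro c hc hwc
          by_contra hcy
          push_neg at hcy
          have : c ≤ w :=
            Finset.le_max' (C.filter (fun c => c < y)) c (Finset.mem_filter.2 ⟨hc, hcy⟩)
          omega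
        have hwchain : w ∈ chain S hS σ' := ih w hwy hwC
        obtain ⟨hwS, k, hk⟩ := Finset.mem_filter.1 hwchain
        refine Finset.mem_filter.2 ⟨hyS, k + 1, ?_⟩
        rw [iter_succ, hk, Option.bind_some, hσ'def]
        simp only [if_pos hwC]
        exact hnxt

/-- on the chain, σ agrees with nxt of the chain -/
lemma nxt_chain {S : Finset ℕ} {hS : S.Nonempty} {σ : ℕ → Option ℕ} (hσ : PStrict S σ)
    {y : ℕ} (hy : y ∈ chain S hS σ) : nxt (chain S hS σ) y = σ y := by
  obtain ⟨hyS, k, hk⟩ := Finset.mem_filter.1 hy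
  cases h : σ y with
  | some z =>
    have hzit : iter S hS σ (k+1) = some z := by
      rw [iter_succ, hk, Option.bind_some, h]
    refine nxt_eq_some.2 ⟨Finset.mem_filter.2 ⟨iter_mem hσ hzit, k+1, hzit⟩,
      (hσ.1 y z h).2.2, ?_⟩
    intro c hc hyc
    obtain ⟨hcS, j, hj⟩ := Finset.mem_filter.1 hc
    have hkj : k < j := by
      by_contra hjk
      push_neg at hjk
      exact absurd (iter_le hσ hjk hj hk) (not_le.2 hyc)
    exact iter_le hσ (by omega) hzit hj
  | none =>
    refine nxt_eq_none.2 ?_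
    intro c hc hyc
    obtain ⟨hcS, j, hj⟩ := Finset.mem_filter.1 hc
    have hkj : k < j := by
      by_contra hjk
      push_neg at hjk
      exact absurd (iter_le hσ hjk hj hk) (not_le.2 hyc)
    have : iter S hS σ (k+1) = none := by
      rw [iter_succ, hk, Option.bind_some, h]
    rw [iter_none this (by omega)] at hj
    cases hj

/-- B2: strict partial injections decompose as (chain of min, rest). -/
def eqStrict (S : Finset ℕ) (hS : S.Nonempty) :
    {σ : ℕ → Option ℕ // PStrict S σ} ≃
      Σ A : ↥((S.erase (S.min' hS)).powerset),
        {τ : ℕ → Option ℕ // PStrict (S \ insert (S.min' hS) A.1) τ} where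
  toFun σ := by
    refine ⟨⟨(chain S hS σ.1).erase (S.min' hS), mem_powerset.2 ?_⟩,
      ⟨fun y => if y ∈ chain S hS σ.1 then none else σ.1 y, ?_⟩⟩
    · exact Finset.erase_subset_erase _ chain_subset
    · rw [Finset.insert_erase min'_mem_chain]
      exact fwd_tau σ.2
  invFun p := ⟨fun y => if y ∈ insert (S.min' hS) p.1.1 then
        nxt (insert (S.min' hS) p.1.1) y else p.2.1 y, by
      refine bwd_sigma hS ?_ (Finset.mem_insert_self _ _) p.2.2
      refine Finset.insert_subset (S.min'_mem hS) ?_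
      exact (mem_powerset.1 p.1.2).trans (Finset.erase_subset _ _)⟩
  left_inv σ := by
    obtain ⟨σ, hσ⟩ := σ
    ext1
    simp only
    rw [Finset.insert_erase min'_mem_chain]
    funext y
    by_cases hy : y ∈ chain S hS σ
    · rw [if_pos hy]
      exact nxt_chain hσ hy
    · rw [if_neg hy, if_neg hy]
  right_inv p := by
    obtain ⟨⟨A, hA⟩, τ, hτ⟩ := p
    have hAx : S.min' hS ∉ A := fun hc =>
      Finset.notMem_erase _ _ (mem_powerset.1 hA hc)
    have hCS : insert (S.min' hS) A ⊆ S :=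
      Finset.insert_subset (S.min'_mem hS) ((mem_powerset.1 hA).trans (Finset.erase_subset _ _))
    have hch : chain S hS (fun y => if y ∈ insert (S.min' hS) A then
        nxt (insert (S.min' hS) A) y else τ y) = insert (S.min' hS) A :=
      chain_bwd hS hCS (Finset.mem_insert_self _ _) hτ
    refine Sigma.subtype_ext (Subtype.ext ?_) ?_
    · simp only
      rw [hch, Finset.erase_insert hAx]
    · simp only
      funext y
      rw [hch]
      by_cases hy : y ∈ insert (S.min' hS) A
      · rw [if_pos hy]
        cases hc : τ y with
        | none => rfl
        | some z =>
          obtain ⟨hymem, -, -⟩ := hτ.1 y z hc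
          exact absurd hy (Finset.mem_sdiff.1 hymem).2
      · rw [if_neg hy, if_neg hy]

lemma powerset_sum (T : Finset ℕ) (g : ℕ → ℕ) :
    ∑ A ∈ T.powerset, g A.card = ∑ j ∈ Finset.range (T.card + 1), T.card.choose j * g j := by
  rw [Finset.sum_powerset]
  refine Finset.sum_congr rfl ?_
  intro j hj
  rw [Finset.sum_congr rfl (fun A hA => by
    rw [(Finset.mem_powersetCard.1 hA).2]), Finset.sum_const, Finset.card_powersetCard,
    smul_eq_mul]

lemma reflect_sum (b : ℕ → ℕ) (m : ℕ) :
    ∑ j ∈ Finset.range (m + 1), m.choose j * b (m - j) =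
      ∑ k ∈ Finset.range (m + 1), m.choose k * b k := by
  rw [← Finset.sum_range_reflect (fun k => m.choose k * b k) (m+1)]
  refine Finset.sum_congr rfl ?_
  intro j hj
  rw [Finset.mem_range] at hj
  have h1 : m + 1 - 1 - j = m - j := by omega
  rw [h1, ← Nat.choose_symm (show j ≤ m by omega)]

lemma strict_card (b : ℕ → ℕ) (hb0 : b 0 = 1)
    (hb : ∀ m, b (m+1) = ∑ k ∈ Finset.range (m+1), Nat.choose m k * b k) :
    ∀ m (S : Finset ℕ), S.card = m → Nat.card {σ : ℕ → Option ℕ // PStrict S σ} = b m := by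
  intro m
  induction m using Nat.strong_induction_on with
  | _ m ih =>
    intro S hScard
    cases m with
    | zero =>
      have hSe : S = ∅ := Finset.card_eq_zero.1 hScard
      subst hSe
      rw [hb0]
      rw [Nat.card_eq_one_iff_unique]
      constructor
      · constructor
        intro σ σ'
        ext1
        funext y
        cases h : σ.1 y with
        | none => cases h' : σ'.1 y with
          | none => rfl
          | some z => exact absurd (σ'.2.1 y z h').1 (Finset.notMem_empty y)
        | some z => exact absurd (σ.2.1 y z h).1 (Finset.notMem_empty y)
      · refine ⟨⟨fun _ => none, ?_, ?_⟩⟩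
        · intro y z h; simp at h
        · intro y y' z h h'; simp at h
    | succ m =>
      have hS : S.Nonempty := Finset.card_pos.1 (by omega)
      rw [Nat.card_congr (eqStrict S hS), natcard_sigma]
      have hT : (S.erase (S.min' hS)).card = m := by
        rw [Finset.card_erase_of_mem (S.min'_mem hS), hScard]
        omega
      have key : ∀ A : ↥((S.erase (S.min' hS)).powerset),
          Nat.card {τ : ℕ → Option ℕ // PStrict (S \ insert (S.min' hS) A.1) τ} =
            b (m - A.1.card) := by
        intro A
        have hA := Finset.mem_powerset.1 A.2
        have hAx : S.min' hS ∉ A.1 := fun hc => Finset.notMem_erase _ _ (hA hc)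
        have hsub : insert (S.min' hS) A.1 ⊆ S :=
          Finset.insert_subset (S.min'_mem hS) (hA.trans (Finset.erase_subset _ _))
        have hAcard : A.1.card ≤ m := hT ▸ Finset.card_le_card hA
        have hcard : (S \ insert (S.min' hS) A.1).card = m - A.1.card := by
          rw [Finset.card_sdiff_of_subset hsub, Finset.card_insert_of_notMem hAx, hScard]
          omega
        exact ih (m - A.1.card) (by omega) _ hcard
      rw [Finset.sum_congr rfl (fun A _ => key A)]
      rw [Finset.sum_coe_sort (S.erase (S.min' hS)).powerset (fun A => b (m - A.card))]
      rw [powerset_sum _ (fun j => b (m - j)), hT, reflect_sum, hb]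

lemma weak_card (b : ℕ → ℕ) (hb0 : b 0 = 1)
    (hb : ∀ m, b (m+1) = ∑ k ∈ Finset.range (m+1), Nat.choose m k * b k)
    (S : Finset ℕ) : Nat.card {σ : ℕ → Option ℕ // PWeak S σ} = b (S.card + 1) := by
  rw [Nat.card_congr (eqWeak S), natcard_sigma]
  have key : ∀ F : ↥S.powerset,
      Nat.card {τ : ℕ → Option ℕ // PStrict (S \ F.1) τ} = b (S.card - F.1.card) := by
    intro F
    have hF := Finset.mem_powerset.1 F.2
    exact strict_card b hb0 hb _ _ (Finset.card_sdiff_of_subset hF)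
  rw [Finset.sum_congr rfl (fun F _ => key F)]
  rw [Finset.sum_coe_sort S.powerset (fun F => b (S.card - F.card))]
  rw [powerset_sum _ (fun j => b (S.card - j)), reflect_sum, hb]

/-- matrix to partial injection -/
def mToFun (n : ℕ) (M : Matrix (Fin (n+1)) (Fin (n+1)) ℂ) : ℕ → Option ℕ :=
  fun y => if hy : y < n+1 then
    (if h : ∃ j : Fin (n+1), M ⟨y, hy⟩ j = 1 then some (h.choose : ℕ) else none) else none

/-- partial injection to matrix -/
def mOf (n : ℕ) (σ : ℕ → Option ℕ) : Matrix (Fin (n+1)) (Fin (n+1)) ℂ :=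
  fun i j => if σ ↑i = some ↑j then 1 else 0

lemma mOf_one {n : ℕ} {σ : ℕ → Option ℕ} {i j : Fin (n+1)} :
    mOf n σ i j = 1 ↔ σ ↑i = some ↑j := by
  unfold mOf
  split_ifs with h
  · simp [h]
  · simp [h]

lemma mOf_dichot {n : ℕ} (σ : ℕ → Option ℕ) (i j : Fin (n+1)) :
    mOf n σ i j = 0 ∨ mOf n σ i j = 1 := by
  unfold mOf
  split_ifs
  · right; rfl
  · left; rfl

lemma mToFun_some {n : ℕ} {M : Matrix (Fin (n+1)) (Fin (n+1)) ℂ} (hM : IsUTPPM n M)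
    {y z : ℕ} : mToFun n M y = some z ↔
      ∃ (hy : y < n+1) (hz : z < n+1), M ⟨y, hy⟩ ⟨z, hz⟩ = 1 := by
  unfold mToFun
  split_ifs with hy hex
  · constructor
    · intro h
      have hspec := hex.choose_spec
      have hz := hex.choose.2
      have hvz : (hex.choose : ℕ) = z := Option.some.inj h
      refine ⟨hy, hvz ▸ hz, ?_⟩
      have : (⟨z, hvz ▸ hz⟩ : Fin (n+1)) = hex.choose := Fin.ext hvz.symm
      rw [this]
      exact hspec
    · rintro ⟨hy', hz, hMz⟩
      have hspec := hex.choose_spec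
      have : hex.choose = ⟨z, hz⟩ := by
        refine hM.2.2.1 ⟨y, hy⟩ _ _ ?_ ?_
        · rw [hspec]; exact one_ne_zero
        · rw [hMz]; exact one_ne_zero
      rw [this]
  · simp only [reduceCtorEq, false_iff]
    rintro ⟨hy', hz, hMz⟩
    exact hex ⟨⟨z, hz⟩, hMz⟩
  · simp only [reduceCtorEq, false_iff]
    rintro ⟨hy', -, -⟩
    exact hy hy'

lemma mOf_isUTPPM {n : ℕ} {σ : ℕ → Option ℕ} (hσ : PWeak (Finset.range (n+1)) σ) :
    IsUTPPM n (mOf n σ) := by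
  refine ⟨?_, mOf_dichot σ, ?_, ?_⟩
  · intro i j hji
    unfold mOf
    rw [if_neg]
    intro hc
    obtain ⟨-, -, hle⟩ := hσ.1 ↑i ↑j hc
    omega
  · intro i j j' hj hj'
    rcases mOf_dichot σ i j with h0 | h1
    · exact absurd h0 hj
    rcases mOf_dichot σ i j' with h0 | h1'
    · exact absurd h0 hj'
    have e1 := mOf_one.1 h1
    have e2 := mOf_one.1 h1'
    rw [e1] at e2
    exact Fin.ext (Option.some.inj e2)
  · intro i i' j hi hi'
    rcases mOf_dichot σ i j with h0 | h1
    · exact absurd h0 hi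
    rcases mOf_dichot σ i' j with h0 | h1'
    · exact absurd h0 hi'
    exact Fin.ext (hσ.2 ↑i ↑i' ↑j (mOf_one.1 h1) (mOf_one.1 h1'))

lemma mToFun_pweak {n : ℕ} {M : Matrix (Fin (n+1)) (Fin (n+1)) ℂ} (hM : IsUTPPM n M) :
    PWeak (Finset.range (n+1)) (mToFun n M) := by
  constructor
  · intro y z h
    obtain ⟨hy, hz, hMz⟩ := (mToFun_some hM).1 h
    refine ⟨Finset.mem_range.2 hy, Finset.mem_range.2 hz, ?_⟩
    by_contra hyz
    push_neg at hyz
    have := hM.1 ⟨y, hy⟩ ⟨z, hz⟩ hyz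
    rw [this] at hMz
    exact one_ne_zero hMz.symm
  · intro y y' z h h'
    obtain ⟨hy, hz, hMz⟩ := (mToFun_some hM).1 h
    obtain ⟨hy', hz', hMz'⟩ := (mToFun_some hM).1 h'
    have := hM.2.2.2 ⟨y, hy⟩ ⟨y', hy'⟩ ⟨z, hz⟩
      (by rw [hMz]; exact one_ne_zero) (by rw [hMz']; exact one_ne_zero)
    exact congrArg Fin.val this

/-- matrices are weak partial injections on `range (n+1)` -/
def eqMat (n : ℕ) :
    {M : Matrix (Fin (n+1)) (Fin (n+1)) ℂ // IsUTPPM n M} ≃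
      {σ : ℕ → Option ℕ // PWeak (Finset.range (n+1)) σ} where
  toFun M := ⟨mToFun n M.1, mToFun_pweak M.2⟩
  invFun σ := ⟨mOf n σ.1, mOf_isUTPPM σ.2⟩
  left_inv M := by
    ext1
    funext i j
    show mOf n (mToFun n M.1) i j = M.1 i j
    by_cases h : mToFun n M.1 ↑i = some ↑j
    · obtain ⟨hy, hz, hMz⟩ := (mToFun_some M.2).1 h
      have he : mOf n (mToFun n M.1) i j = 1 := mOf_one.2 h
      rw [he]
      have hii : (⟨(i : ℕ), hy⟩ : Fin (n+1)) = i := Fin.ext rfl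
      have hjj : (⟨(j : ℕ), hz⟩ : Fin (n+1)) = j := Fin.ext rfl
      rw [hii, hjj] at hMz
      exact hMz.symm
    · have he : mOf n (mToFun n M.1) i j = 0 := by
        rcases mOf_dichot (mToFun n M.1) i j with h0 | h1
        · exact h0
        · exact absurd (mOf_one.1 h1) h
      rw [he]
      rcases M.2.2.1 i j with h0 | h1
      · exact h0.symm
      · exfalso
        exact h ((mToFun_some M.2).2 ⟨i.2, j.2, by
          have hii : (⟨(i : ℕ), i.2⟩ : Fin (n+1)) = i := Fin.ext rfl
          have hjj : (⟨(j : ℕ), j.2⟩ : Fin (n+1)) = j := Fin.ext rfl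
          rw [hii, hjj]
          exact h1⟩)
  right_inv σ := by
    ext1
    funext y
    show mToFun n (mOf n σ.1) y = σ.1 y
    cases hc : σ.1 y with
    | some z =>
      obtain ⟨hy, hz, -⟩ := σ.2.1 y z hc
      rw [Finset.mem_range] at hy hz
      refine (mToFun_some (mOf_isUTPPM σ.2)).2 ⟨hy, hz, ?_⟩
      refine mOf_one.2 ?_
      exact hc
    | none =>
      cases hm : mToFun n (mOf n σ.1) y with
      | none => rfl
      | some z =>
        exfalso
        obtain ⟨hy, hz, hMz⟩ := (mToFun_some (mOf_isUTPPM σ.2)).1 hm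
        have := mOf_one.1 hMz
        simp only at this
        rw [hc] at this
        cases this

/-- the number of upper-triangular partial permutation matrices of
size `n+1` is the Bell number `b_{n+2}`, where `b_0 = 1` and
`b_{m+1} = ∑_{k=0}^m C(m,k) b_k`. -/
theorem stmt7 (n : ℕ) (b : ℕ → ℕ) (hb0 : b 0 = 1)
    (hb : ∀ m, b (m+1) = ∑ k ∈ Finset.range (m+1), Nat.choose m k * b k) :
    Nat.card {M : Matrix (Fin (n+1)) (Fin (n+1)) ℂ // IsUTPPM n M} = b (n + 2) := by
  rw [Nat.card_congr (eqMat n), weak_card b hb0 hb, Finset.card_range]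

end
end

section
/- For the equioriented type A_n quiver over ℂ, every indecomposable finite-dimensional representation is isomorphic to an interval representation U_{a,b} for some 1 ≤ a ≤ b ≤ n, where U_{a,b} has ℂ at vertices a,…,b, zero elsewhere, identity maps between consecutive nonzero spaces, and zero maps otherwise. -/
section Aux
variable {n : ℕ} (W : Fin n → Type) [∀ i, AddCommGroup (W i)] [∀ i, Module ℂ (W i)]
  (f : ∀ i : Fin n, ∀ h : (i : ℕ) + 1 < n, W i →ₗ[ℂ] W ⟨(i : ℕ) + 1, h⟩)

noncomputable def comps : (j : ℕ) → (hj : j < n) → (i : ℕ) → (hij : i ≤ j) →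
    (W ⟨i, lt_of_le_of_lt hij hj⟩ →ₗ[ℂ] W ⟨j, hj⟩)
  | 0, hj, i, hij => by
      have h : i = 0 := Nat.le_zero.mp hij
      subst h
      exact LinearMap.id
  | j+1, hj, i, hij =>
      if h : i = j + 1 then by subst h; exact LinearMap.id
      else (f ⟨j, Nat.lt_of_succ_lt hj⟩ hj).comp
        (comps j (Nat.lt_of_succ_lt hj) i (Nat.lt_succ_iff.mp (Nat.lt_of_le_of_ne hij h)))

lemma comps_self (j : ℕ) (hj : j < n) (h' : j ≤ j) :
    comps W f j hj j h' = LinearMap.id := by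
  cases j with
  | zero => rfl
  | succ k => rw [comps, dif_pos rfl]

lemma comps_succ (j : ℕ) (hj : j + 1 < n) (i : ℕ) (hij : i ≤ j) (h' : i ≤ j + 1) :
    comps W f (j+1) hj i h'
      = (f ⟨j, Nat.lt_of_succ_lt hj⟩ hj).comp (comps W f j (Nat.lt_of_succ_lt hj) i hij) := by
  rw [comps, dif_neg (by omega)]

lemma comps_comp (j : ℕ) (hj : j < n) (i : ℕ) (hij : i ≤ j) (k : ℕ) (hki : k ≤ i)
    (x : W ⟨k, lt_of_le_of_lt (le_trans hki hij) hj⟩) :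
    comps W f j hj i hij (comps W f i (lt_of_le_of_lt hij hj) k hki x)
      = comps W f j hj k (le_trans hki hij) x := by
  induction j with
  | zero =>
      have hi : i = 0 := Nat.le_zero.mp hij
      have hk : k = 0 := by omega
      subst hi; subst hk
      simp [comps_self]
  | succ m ih =>
      by_cases h : i = m + 1
      · subst h
        rw [comps_self]
        rfl
      · have him : i ≤ m := by omega
        rw [comps_succ W f m hj i him hij, comps_succ W f m hj k (le_trans hki him)]
        simp only [LinearMap.comp_apply]
        rw [ih (Nat.lt_of_succ_lt hj) him]

end Aux

/-- Gabriel, equioriented type `A_n`: every indecomposable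
finite-dimensional representation of the equioriented `A_n` quiver over ℂ is
isomorphic to an interval representation `U_{a,b}`: its dimension vector is the
indicator of an interval `[a,b]` and all maps inside the interval are isomorphisms
(identities in suitable bases), the remaining maps being zero. -/
theorem stmt13 (n : ℕ) (W : Fin n → Type)
    [∀ i, AddCommGroup (W i)] [∀ i, Module ℂ (W i)] [∀ i, FiniteDimensional ℂ (W i)]
    (f : ∀ i : Fin n, ∀ h : (i : ℕ) + 1 < n, W i →ₗ[ℂ] W ⟨(i : ℕ) + 1, h⟩)
    (hnz : ∃ i, Module.finrank ℂ (W i) ≠ 0)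
    (hindec : ¬ ∃ (U V : ∀ i, Submodule ℂ (W i)),
        (∀ i : Fin n, ∀ h : (i : ℕ) + 1 < n, ∀ x ∈ U i, f i h x ∈ U ⟨(i : ℕ) + 1, h⟩) ∧
        (∀ i : Fin n, ∀ h : (i : ℕ) + 1 < n, ∀ x ∈ V i, f i h x ∈ V ⟨(i : ℕ) + 1, h⟩) ∧
        (∀ i, U i ⊓ V i = ⊥) ∧ (∀ i, U i ⊔ V i = ⊤) ∧
        (∃ i, U i ≠ ⊥) ∧ (∃ i, V i ≠ ⊥)) :
    ∃ a b : Fin n, a ≤ b ∧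
      (∀ i : Fin n, Module.finrank ℂ (W i) = if a ≤ i ∧ i ≤ b then 1 else 0) ∧
      (∀ i : Fin n, ∀ h : (i : ℕ) + 1 < n,
        a ≤ i → (⟨(i : ℕ) + 1, h⟩ : Fin n) ≤ b → Function.Bijective (f i h)) := by
  classical
  -- the least vertex `l` with nonzero space
  have hex : ∃ j : ℕ, ∃ hj : j < n, Module.finrank ℂ (W ⟨j, hj⟩) ≠ 0 := by
    obtain ⟨i, hi⟩ := hnz
    exact ⟨i, i.isLt, hi⟩
  set l := Nat.find hex with hldef
  obtain ⟨hl, hlnz⟩ := Nat.find_spec hex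
  have hlmin : ∀ m (hm : m < n), m < l → Module.finrank ℂ (W ⟨m, hm⟩) = 0 := by
    intro m hm hml
    by_contra hc
    exact Nat.find_min hex hml ⟨hm, hc⟩
  have hsub : ∀ i : Fin n, (i : ℕ) < l → Subsingleton (W i) := by
    intro i hi
    have := hlmin i i.isLt hi
    exact Module.finrank_zero_iff.mp this
  haveI : Nontrivial (W ⟨l, hl⟩) := by
    rcases (subsingleton_or_nontrivial (W ⟨l, hl⟩)) with h | h
    · exact absurd (Module.finrank_zero_of_subsingleton) hlnz
    · exact h
  -- the greatest vertex `b` reachable from `l`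
  set Pb : ℕ → Prop := fun j => ∃ hj : j < n, ∃ hlj : l ≤ j, comps W f j hj l hlj ≠ 0 with hPbdef
  have hPl : Pb l := by
    refine ⟨hl, le_rfl, ?_⟩
    rw [comps_self]
    intro h0
    obtain ⟨x, hx⟩ := exists_ne (0 : W ⟨l, hl⟩)
    exact hx (by simpa using DFunLike.congr_fun h0 x)
  set b := Nat.findGreatest Pb (n - 1) with hbdef
  obtain ⟨hb, hlb, hcb⟩ : Pb b := Nat.findGreatest_spec (m := l) (by omega) hPl
  have hmax : ∀ j (hj : j < n) (hlj : l ≤ j), b < j → comps W f j hj l hlj = 0 := by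
    intro j hj hlj hbj
    by_contra hne
    exact (Nat.findGreatest_is_greatest hbj (by omega)) ⟨hj, hlj, hne⟩
  -- a vector with nonzero image at b, and a normalized functional
  obtain ⟨v, hv⟩ : ∃ v, comps W f b hb l hlb v ≠ 0 := by
    by_contra h
    push_neg at h
    exact hcb (LinearMap.ext fun x => by simpa using h x)
  obtain ⟨g0, hg0⟩ : ∃ g0 : Module.Dual ℂ (W ⟨b, hb⟩), g0 (comps W f b hb l hlb v) ≠ 0 := by
    by_contra h
    push_neg at h
    exact hv ((Module.forall_dual_apply_eq_zero_iff ℂ _).mp h)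
  set g : Module.Dual ℂ (W ⟨b, hb⟩) := (g0 (comps W f b hb l hlb v))⁻¹ • g0 with hgdef
  have hgw : g (comps W f b hb l hlb v) = 1 := by
    simp [hgdef, inv_mul_cancel₀ hg0]
  have hvne : v ≠ 0 := by
    intro h0
    exact hv (by rw [h0, map_zero])
  -- the two invariant families of submodules
  set U : ∀ i : Fin n, Submodule ℂ (W i) := fun i =>
    if h : l ≤ (i : ℕ) then ℂ ∙ (comps W f i i.isLt l h v) else ⊥ with hUdef
  set V : ∀ i : Fin n, Submodule ℂ (W i) := fun i =>
    if h : (i : ℕ) ≤ b then LinearMap.ker (g ∘ₗ comps W f b hb i h) else ⊤ with hVdef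
  -- the g-value of u_i is 1 inside the interval
  have hgval : ∀ (i : Fin n) (hli : l ≤ (i : ℕ)) (hib : (i : ℕ) ≤ b),
      g (comps W f b hb i hib (comps W f i i.isLt l hli v)) = 1 := by
    intro i hli hib
    have h2 : comps W f b hb i hib (comps W f i i.isLt l hli v)
        = comps W f b hb l hlb v := comps_comp W f b hb i hib l hli v
    rw [h2, hgw]
  have hune : ∀ (i : Fin n) (hli : l ≤ (i : ℕ)) (hib : (i : ℕ) ≤ b),
      comps W f i i.isLt l hli v ≠ 0 := by
    intro i hli hib h0
    have := hgval i hli hib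
    rw [h0, map_zero, map_zero] at this
    exact zero_ne_one this
  -- one-step edge relation
  have key1 : ∀ (i : ℕ) (hi : i < n) (h : i + 1 < n) (hli : l ≤ i) (h' : l ≤ i + 1),
      f ⟨i, hi⟩ h (comps W f i hi l hli v) = comps W f (i+1) h l h' v := by
    intro i hi h hli h'
    rw [comps_succ W f i h l hli h']
    rfl
  have key2 : ∀ (i : ℕ) (hi : i < n) (h : i + 1 < n) (x : W ⟨i, hi⟩),
      comps W f (i+1) h i (by omega) x = f ⟨i, hi⟩ h x := by
    intro i hi h x
    rw [comps_succ W f i h i le_rfl, comps_self]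
    rfl
  -- U is invariant
  have hUinv : ∀ i : Fin n, ∀ h : (i : ℕ) + 1 < n, ∀ x ∈ U i, f i h x ∈ U ⟨(i : ℕ) + 1, h⟩ := by
    intro i h x hx
    by_cases hli : l ≤ (i : ℕ)
    · rw [hUdef] at hx ⊢
      simp only [dif_pos hli, dif_pos (le_trans hli (Nat.le_succ _))] at hx ⊢
      obtain ⟨c, rfl⟩ := Submodule.mem_span_singleton.mp hx
      rw [map_smul]
      refine Submodule.smul_mem _ c ?_
      have hm : f i h (comps W f i i.isLt l hli v)
          = comps W f ((i : ℕ)+1) h l (le_trans hli (Nat.le_succ _)) v :=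
        key1 i i.isLt h hli _
      rw [hm]
      exact Submodule.mem_span_singleton_self _
    · rw [hUdef] at hx
      simp only [dif_neg hli, Submodule.mem_bot] at hx
      rw [hx, map_zero]
      exact Submodule.zero_mem _
  -- V is invariant
  have hVinv : ∀ i : Fin n, ∀ h : (i : ℕ) + 1 < n, ∀ x ∈ V i, f i h x ∈ V ⟨(i : ℕ) + 1, h⟩ := by
    intro i h x hx
    by_cases hib : (i : ℕ) + 1 ≤ b
    · have hib0 : (i : ℕ) ≤ b := by omega
      rw [hVdef] at hx ⊢
      simp only [dif_pos hib, dif_pos hib0, LinearMap.mem_ker, LinearMap.comp_apply] at hx ⊢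
      have e1 : comps W f ((i : ℕ)+1) (lt_of_le_of_lt hib hb) (i : ℕ) (by omega) x
          = f i h x := key2 i i.isLt _ x
      have e3 : comps W f b hb ((i : ℕ)+1) hib (f i h x)
          = comps W f b hb i hib0 x := by
        rw [← e1]
        exact comps_comp W f b hb ((i : ℕ)+1) hib (i : ℕ) (by omega) x
      rw [e3, hx]
    · rw [hVdef]
      simp only [dif_neg hib]
      exact Submodule.mem_top
  -- U above b is trivial
  have hUtriv : ∀ i : Fin n, b < (i : ℕ) → U i = ⊥ := by
    intro i hbi
    by_cases hli : l ≤ (i : ℕ)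
    · rw [hUdef]
      simp only [dif_pos hli]
      have h0 : comps W f i i.isLt l hli v = 0 := by
        rw [hmax i i.isLt hli hbi]
        rfl
      rw [h0, Submodule.span_zero_singleton]
    · rw [hUdef]; simp only [dif_neg hli]
  -- intersection trivial
  have hinf : ∀ i, U i ⊓ V i = ⊥ := by
    intro i
    by_cases hli : l ≤ (i : ℕ)
    · by_cases hib : (i : ℕ) ≤ b
      · rw [eq_bot_iff]
        intro x hx
        rw [Submodule.mem_inf] at hx
        obtain ⟨hxU, hxV⟩ := hx
        rw [hUdef] at hxU
        simp only [dif_pos hli] at hxU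
        obtain ⟨c, rfl⟩ := Submodule.mem_span_singleton.mp hxU
        rw [hVdef] at hxV
        simp only [dif_pos hib, LinearMap.mem_ker, LinearMap.comp_apply, map_smul,
          smul_eq_mul, hgval i hli hib, mul_one] at hxV
        rw [hxV, Submodule.mem_bot, zero_smul]
      · rw [hUtriv i (by omega), bot_inf_eq]
    · rw [hUdef]
      simp only [dif_neg hli, bot_inf_eq]
  -- sum is everything
  have hsup : ∀ i, U i ⊔ V i = ⊤ := by
    intro i
    by_cases hli : l ≤ (i : ℕ)
    · by_cases hib : (i : ℕ) ≤ b
      · rw [eq_top_iff]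
        intro x _
        set c := g (comps W f b hb i hib x) with hcdef
        refine Submodule.mem_sup.mpr ⟨c • comps W f i i.isLt l hli v, ?_, x - c • comps W f i i.isLt l hli v, ?_, by abel⟩
        · rw [hUdef]
          simp only [dif_pos hli]
          exact Submodule.smul_mem _ _ (Submodule.mem_span_singleton_self _)
        · rw [hVdef]
          simp only [dif_pos hib, LinearMap.mem_ker, LinearMap.comp_apply, map_sub, map_smul,
            smul_eq_mul, hgval i hli hib, mul_one]
          rw [← hcdef, sub_self]
      · rw [hVdef]
        simp only [dif_neg hib, sup_top_eq]
    · haveI := hsub i (by omega)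
      rw [eq_top_iff]
      intro x _
      have hx0 : x = 0 := Subsingleton.elim x 0
      rw [hx0]
      exact Submodule.zero_mem _
  -- U is nonzero at l
  have hUne : U ⟨l, hl⟩ ≠ ⊥ := by
    rw [hUdef]
    simp only [dif_pos (le_refl l)]
    rw [Ne, Submodule.span_singleton_eq_bot]
    have : comps W f l hl l le_rfl v = v := by rw [comps_self]; rfl
    rw [this]
    exact hvne
  -- indecomposability forces V = ⊥ everywhere
  have hVbot : ∀ i, V i = ⊥ := by
    by_contra h
    push_neg at h
    obtain ⟨i0, hi0⟩ := h
    exact hindec ⟨U, V, hUinv, hVinv, hinf, hsup, ⟨⟨l, hl⟩, hUne⟩, ⟨i0, hi0⟩⟩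
  -- hence U = ⊤ everywhere
  have hUtop : ∀ i, U i = ⊤ := by
    intro i
    have := hsup i
    rw [hVbot i, sup_bot_eq] at this
    exact this
  -- inside the interval, W i is spanned by u_i
  have hspan : ∀ (i : Fin n) (hli : l ≤ (i : ℕ)),
      (ℂ ∙ (comps W f i i.isLt l hli v)) = ⊤ := by
    intro i hli
    have := hUtop i
    rw [hUdef] at this
    simpa only [dif_pos hli] using this
  refine ⟨⟨l, hl⟩, ⟨b, hb⟩, by simp [Fin.mk_le_mk, hlb], ?_, ?_⟩
  · intro i
    by_cases hli : l ≤ (i : ℕ)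
    · by_cases hib : (i : ℕ) ≤ b
      · rw [if_pos ⟨by simpa [Fin.le_def] using hli, by simpa [Fin.le_def] using hib⟩]
        have h1 : Module.finrank ℂ (ℂ ∙ (comps W f i i.isLt l hli v)) = 1 :=
          finrank_span_singleton (hune i hli hib)
        rw [← h1]
        rw [hspan i hli]
        exact (finrank_top ℂ _).symm
      · rw [if_neg (by simp [Fin.le_def]; omega)]
        have hUt := hUtop i
        rw [hUtriv i (by omega)] at hUt
        haveI : Subsingleton (W i) := by
          refine subsingleton_of_forall_eq 0 fun x => ?_
          have hx : x ∈ (⊥ : Submodule ℂ (W i)) := by rw [hUt]; trivial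
          simpa using hx
        exact Module.finrank_zero_of_subsingleton
    · rw [if_neg (by simp [Fin.le_def]; omega)]
      exact hlmin i i.isLt (by omega)
  · intro i h hai hib
    have hli : l ≤ (i : ℕ) := by simpa [Fin.le_def] using hai
    have hib' : (i : ℕ) + 1 ≤ b := by simpa [Fin.le_def] using hib
    have hli' : l ≤ (i : ℕ) + 1 := by omega
    set u1 := comps W f i i.isLt l hli v with hu1
    set u2 := comps W f ((i : ℕ)+1) h l hli' v with hu2
    have hfu : f i h u1 = u2 := key1 i i.isLt h hli hli'
    have hu2ne : u2 ≠ 0 := hune ⟨(i : ℕ)+1, h⟩ hli' hib'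
    have hs1 : ∀ x : W i, ∃ c : ℂ, x = c • u1 := by
      intro x
      have hx : x ∈ (ℂ ∙ u1) := by rw [hspan i hli]; trivial
      obtain ⟨c, hc⟩ := Submodule.mem_span_singleton.mp hx
      exact ⟨c, hc.symm⟩
    have hs2 : ∀ y : W ⟨(i : ℕ)+1, h⟩, ∃ c : ℂ, y = c • u2 := by
      intro y
      have hy : y ∈ (ℂ ∙ u2) := by rw [hspan ⟨(i : ℕ)+1, h⟩ hli']; trivial
      obtain ⟨c, hc⟩ := Submodule.mem_span_singleton.mp hy
      exact ⟨c, hc.symm⟩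
    constructor
    · intro x y hxy
      obtain ⟨c, rfl⟩ := hs1 x
      obtain ⟨d, rfl⟩ := hs1 y
      rw [map_smul, map_smul, hfu] at hxy
      have : c = d := by
        have := sub_eq_zero.mpr hxy
        rw [← sub_smul] at this
        rcases smul_eq_zero.mp this with h' | h'
        · exact sub_eq_zero.mp h'
        · exact absurd h' hu2ne
      rw [this]
    · intro y
      obtain ⟨c, rfl⟩ := hs2 y
      exact ⟨c • u1, by rw [map_smul, hfu]⟩
end
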